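/- arXiv:1709.10013 — 8 statements merged into one kernel-verified Lean document; each statement's English description precedes it below -/
import Mathlib

section
/- Let A be the compartmental matrix of a linear compartment model with n compartments, with edge and leak labels taken in a commutative ring, and write det(λI − A) = λ^n + e_{n−1}λ^{n−1} + ⋯ + e_1λ + e_0. Then for each i = 0, 1, …, n−1, the coefficient e_i equals the sum, over all spanning incoming forests F of the leak-augmented graph G̃ having exactly n−i edges, of the product π_F of the edge labels of F; that is, e_i = Σ_{F ∈ 𝓕_{n−i}(G̃)} π_F. -/
open scoped Classical

/-- An *incoming forest*: a finite set of directed edges such that the underlying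
undirected graph has no cycles (no loops, no pairs of opposite edges, and the
associated simple graph is acyclic) and each vertex has at most one outgoing edge.
(Viewed as a spanning subgraph: all vertices are kept, only edges are recorded.) -/
def IsIncomingForest {V : Type*} (F : Finset (V × V)) : Prop :=
  (∀ e ∈ F, e.1 ≠ e.2) ∧
  (∀ e ∈ F, (e.2, e.1) ∉ F) ∧
  (SimpleGraph.fromRel fun u v => (u, v) ∈ F).IsAcyclic ∧
  (∀ e ∈ F, ∀ e' ∈ F, e.1 = e'.1 → e = e')

/-- The sum, over all spanning incoming forests with exactly `k` edges contained in the
edge set `E`, of the product of the edge labels (`w e` is the label of edge `e`). -/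
noncomputable def forestSum {V R : Type*} [DecidableEq V] [CommRing R]
    (E : Finset (V × V)) (w : V × V → R) (k : ℕ) : R :=
  ∑ F ∈ E.powerset.filter (fun F => F.card = k ∧ IsIncomingForest F), ∏ e ∈ F, w e

/-- A linear compartment model on vertex type `V` with labels in `R`:
a directed graph (edge `(j, i)` means `j → i`, labelled `a_{ij} = label (j,i)`),
a set of leak vertices, and a leak label `a_{0i} = leakLabel i` for each leak. -/
structure LinCompModel (V : Type*) (R : Type*) where
  edges : Finset (V × V)
  label : V × V → R
  leak : Finset V
  leakLabel : V → R
  no_loops : ∀ e ∈ edges, e.1 ≠ e.2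

/-- The compartmental matrix: `A i j = a_{ij}` if `j → i` is an edge,
`A i i = -a_{0i} - ∑_{k : i → k} a_{ki}`, and `0` otherwise. -/
noncomputable def compMatrix {V R : Type*} [Fintype V] [DecidableEq V] [CommRing R]
    (M : LinCompModel V R) : Matrix V V R :=
  Matrix.of fun i j =>
    if i = j then
      -(if i ∈ M.leak then M.leakLabel i else 0)
        - ∑ e ∈ M.edges.filter (fun e => e.1 = i), M.label e
    else if (j, i) ∈ M.edges then M.label (j, i) else 0

/-- The edge set of the leak-augmented graph `G̃`: the new vertex `0` is `none`,
original vertices `i` are `some i`; edges of `G` are kept and each leak `i` gives an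
edge `i → 0`. -/
noncomputable def augEdges {V R : Type*} [DecidableEq V] (M : LinCompModel V R) :
    Finset (Option V × Option V) :=
  M.edges.image (fun e => (some e.1, some e.2)) ∪ M.leak.image (fun i => (some i, none))

/-- The edge labels of the leak-augmented graph `G̃`. -/
def augLabel {V R : Type*} [CommRing R] (M : LinCompModel V R) :
    Option V × Option V → R :=
  fun e => match e with
    | (some j, some i) => M.label (j, i)
    | (some i, none) => M.leakLabel i
    | _ => 0

/-!
Column `j` of `X • 1 - A` is `X eⱼ + ∑ a_e (eⱼ - e_h)` over the edges `e : j → h` of `G̃`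
leaving `j`, where `e_h = 0` when `h` is the new vertex `0`. By multilinearity the determinant
is a sum over choices, for every compartment, of either `X` or one edge leaving it; the term of
a choice with `k` edges is `X ^ (n - k)` times the product of their labels times
`det (1 - P)`, where `P` is the matrix of the partial map sending each compartment to the head
of its chosen edge. This determinant is `1` when the chosen edges contain no directed cycle
(order the vertices by their rank along the map: `1 - P` becomes block unitriangular) and `0`
otherwise (the indicator of the vertices that reach a cycle lies in its kernel). Finally, a set
of edges with at most one edge leaving each vertex is an incoming forest exactly when it has
no directed cycle, and such sets inside `G̃` are precisely the edge sets of the choices.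
-/

open Relation

section IncomingForest

variable {W : Type*} {F : Finset (W × W)}

theorem reachable_deleteEdges_of_transGen (hloop : ∀ e ∈ F, e.1 ≠ e.2)
    (hopp : ∀ e ∈ F, (e.2, e.1) ∉ F) {u v a : W} (huv : (u, v) ∈ F)
    (h : TransGen (fun x y => (x, y) ∈ F) a u) :
    ((SimpleGraph.fromRel fun x y => (x, y) ∈ F).deleteEdges {s(u, v)}).Reachable a u := by
  have step : ∀ x y, (x, y) ∈ F → x ≠ u →
      ((SimpleGraph.fromRel fun x y => (x, y) ∈ F).deleteEdges {s(u, v)}).Adj x y := by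
    intro x y hxy hxu
    refine SimpleGraph.deleteEdges_adj.mpr
      ⟨(SimpleGraph.fromRel_adj _ _ _).mpr ⟨hloop _ hxy, .inl hxy⟩, ?_⟩
    intro hmem
    rcases Sym2.eq_iff.mp hmem with ⟨rfl, -⟩ | ⟨rfl, rfl⟩
    · exact hxu rfl
    · exact hopp _ huv hxy
  -- a directed path stops on its first arrival at `u`, so it never uses the edge `u → v`
  induction h using TransGen.head_induction_on with
  | @single x hxu =>
    by_cases hx : x = u
    · rw [hx]
    · exact (step x u hxu hx).reachable
  | @head x y hxy _ ih =>
    by_cases hx : x = u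
    · rw [hx]
    · exact (step x y hxy hx).reachable.trans ih

theorem reflTransGen_of_reachable_deleteEdges (hF : Set.InjOn Prod.fst (F : Set (W × W)))
    {u v : W} (huv : (u, v) ∈ F)
    (h : ((SimpleGraph.fromRel fun x y => (x, y) ∈ F).deleteEdges {s(u, v)}).Reachable u v) :
    ReflTransGen (fun x y => (x, y) ∈ F) v u := by
  -- the vertices that flow into `u` are closed under all edges other than `u → v`
  by_contra hv
  obtain ⟨p⟩ := h
  obtain ⟨d, -, hdS, hdS'⟩ :=
    p.exists_boundary_dart {x | ReflTransGen (fun x y => (x, y) ∈ F) x u} .refl hv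
  obtain ⟨⟨-, hd | hd⟩, hdel⟩ := SimpleGraph.deleteEdges_adj.mp d.adj
  · rcases hdS.cases_head with hdu | ⟨y, hy, hyu⟩
    · obtain ⟨h1, h2⟩ := Prod.mk.inj (hF hd huv hdu)
      exact hdel (by rw [h1, h2]; rfl)
    · obtain rfl : d.snd = y := congrArg Prod.snd (hF hd hy rfl)
      exact hdS' hyu
  · exact hdS' (.head hd hdS)

theorem isIncomingForest_iff :
    IsIncomingForest F ↔
      Set.InjOn Prod.fst (F : Set (W × W)) ∧ ∀ w, ¬ TransGen (fun x y => (x, y) ∈ F) w w := by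
  constructor
  · rintro ⟨hloop, hopp, hacyc, hF⟩
    refine ⟨fun e he e' he' => hF e he e' he', fun w hw => ?_⟩
    obtain ⟨v, hwv, hvw⟩ := TransGen.head'_iff.mp hw
    rcases reflTransGen_iff_eq_or_transGen.mp hvw with rfl | hvw
    · exact hloop _ hwv rfl
    · have hbridge := SimpleGraph.isAcyclic_iff_forall_adj_isBridge.mp hacyc
        ((SimpleGraph.fromRel_adj _ _ _).mpr ⟨hloop _ hwv, .inl hwv⟩)
      exact hbridge (reachable_deleteEdges_of_transGen hloop hopp hwv hvw).symm
  · rintro ⟨hF, hcyc⟩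
    have hbridge : ∀ u v, (u, v) ∈ F →
        (SimpleGraph.fromRel fun x y => (x, y) ∈ F).IsBridge s(u, v) := fun u v huv hreach =>
      hcyc u (.head' huv (reflTransGen_of_reachable_deleteEdges hF huv hreach))
    refine ⟨fun e he hloop => hcyc e.1 (.single (by convert he using 1; exact Prod.ext rfl hloop)),
      fun e he hopp => hcyc e.1 (.head he (.single hopp)), ?_, fun e he e' he' => hF he he'⟩
    refine SimpleGraph.isAcyclic_iff_forall_adj_isBridge.mpr fun u v huv => ?_
    rcases ((SimpleGraph.fromRel_adj _ _ _).mp huv).2 with h | h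
    · exact hbridge u v h
    · rw [Sym2.eq_swap]; exact hbridge v u h

end IncomingForest

theorem Relation.forall_not_transGen_option_iff {α : Type*} {r : Option α → Option α → Prop}
    (h : ∀ y, ¬ r none y) :
    (∀ w, ¬ TransGen r w w) ↔ ∀ a, ¬ TransGen (fun a b => r (some a) (some b)) a a := by
  refine ⟨fun hr a ha => hr (some a) (ha.lift some fun _ _ => id), fun hr w hw => ?_⟩
  have key : ∀ x y, TransGen r x y → ∀ a b, x = some a → y = some b →
      TransGen (fun a b => r (some a) (some b)) a b := by
    intro x y hxy
    induction hxy with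
    | single hxy => rintro a b rfl rfl; exact .single hxy
    | @tail z y _ hzy ih =>
      rintro a b rfl rfl
      cases z with
      | none => exact absurd hzy (h _)
      | some c => exact (ih a c rfl rfl).tail hzy
  cases w with
  | none => obtain ⟨y, hy, -⟩ := TransGen.head'_iff.mp hw; exact h y hy
  | some a => exact hr a (key _ _ hw a a rfl rfl)

section PartialFunMatrix

open Matrix

variable {V : Type*} [Fintype V] [DecidableEq V] {S : Type*} [CommRing S]

def partialFunMatrix (f : V → Option V) : Matrix V V S :=
  Matrix.of fun j i => if f j = some i then 1 else 0

theorem partialFunMatrix_mulVec (f : V → Option V) (x : V → S) (j : V) :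
    (partialFunMatrix f *ᵥ x) j = (f j).elim 0 x := by
  cases h : f j <;> simp [partialFunMatrix, mulVec, dotProduct, h]

theorem det_one_sub_partialFunMatrix_of_acyclic {f : V → Option V}
    (hf : ∀ a, ¬ TransGen (fun a b => f a = some b) a a) :
    (1 - partialFunMatrix f : Matrix V V S).det = 1 := by
  set below : V → V → Prop := fun b a => f a = some b
  have : IsTrans V (TransGen below) := ⟨fun _ _ _ => TransGen.trans⟩
  have : Std.Irrefl (TransGen below) := ⟨fun a ha => hf a (transGen_swap.mp ha)⟩
  have : IsWellFounded V below :=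
    ⟨(Finite.wellFounded_of_trans_of_irrefl _).mono fun _ _ => TransGen.single⟩
  let ρ := IsWellFounded.rank below
  have hρ : ∀ {a b}, f a = some b → ρ b < ρ a := fun h => IsWellFounded.rank_lt_of_rel h
  have htri : (1 - partialFunMatrix f : Matrix V V S).BlockTriangular (OrderDual.toDual ∘ ρ) := by
    intro i j hij
    have hne : i ≠ j := by rintro rfl; exact lt_irrefl _ hij
    have hfij : f i ≠ some j := fun h => (hρ h).not_gt hij
    simp [partialFunMatrix, hne, hfij]
  rw [htri.det]
  refine Finset.prod_eq_one fun k _ => ?_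
  rw [show (1 - partialFunMatrix f : Matrix V V S).toSquareBlock (OrderDual.toDual ∘ ρ) k = 1
    from ?_, det_one]
  ext ⟨i, hi⟩ ⟨j, hj⟩
  have hfij : f i ≠ some j := fun h => (hρ h).ne (hj.trans hi.symm)
  simp [toSquareBlock, toSquareBlockProp_def, partialFunMatrix, one_apply, hfij]

theorem det_one_sub_partialFunMatrix_of_transGen {f : V → Option V} {a : V}
    (ha : TransGen (fun a b => f a = some b) a a) :
    (1 - partialFunMatrix f : Matrix V V S).det = 0 := by
  set D := {j | ∃ c, ReflTransGen (fun a b => f a = some b) j c ∧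
    TransGen (fun a b => f a = some b) c c}
  have hD : ∀ j, j ∈ D ↔ ∃ i, f j = some i ∧ i ∈ D := by
    refine fun j => ⟨fun ⟨c, hjc, hc⟩ => ?_, fun ⟨i, hji, c, hic, hc⟩ => ⟨c, .head hji hic, hc⟩⟩
    rcases hjc.cases_head with rfl | ⟨i, hji, hic⟩
    · obtain ⟨i, hji, hij⟩ := TransGen.head'_iff.mp hc
      exact ⟨i, hji, j, hij, hc⟩
    · exact ⟨i, hji, c, hic, hc⟩
  let x : V → S := fun j => if j ∈ D then 1 else 0
  have hx : (1 - partialFunMatrix f : Matrix V V S) *ᵥ x = 0 := by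
    ext j
    rw [sub_mulVec, one_mulVec, Pi.sub_apply, partialFunMatrix_mulVec, Pi.zero_apply, sub_eq_zero]
    cases h : f j <;> simp [x, hD j, h]
  have hdet : (1 - partialFunMatrix f : Matrix V V S).det • x = 0 := by
    rw [← one_mulVec x, ← smul_mulVec, ← adjugate_mul, ← mulVec_mulVec, hx, mulVec_zero]
  simpa [x, show a ∈ D from ⟨a, .refl, ha⟩] using congrFun hdet a

theorem det_one_sub_partialFunMatrix (f : V → Option V) :
    (1 - partialFunMatrix f : Matrix V V S).det =
      if ∀ a, ¬ TransGen (fun a b => f a = some b) a a then 1 else 0 := by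
  split_ifs with hf
  · exact det_one_sub_partialFunMatrix_of_acyclic hf
  · push Not at hf
    exact det_one_sub_partialFunMatrix_of_transGen hf.choose_spec

end PartialFunMatrix

theorem det_of_sum_smul_rows {ι κ S : Type*} [Fintype ι] [DecidableEq ι] [CommRing S]
    (t : ι → Finset κ) (c : ι → κ → S) (v : ι → κ → ι → S) :
    (Matrix.of fun j => ∑ o ∈ t j, c j o • v j o).det =
      ∑ r ∈ Fintype.piFinset t, (∏ j, c j (r j)) * (Matrix.of fun j => v j (r j)).det := by
  change Matrix.detRowAlternating.toMultilinearMap (fun j => ∑ o ∈ t j, c j o • v j o) = _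
  rw [MultilinearMap.map_sum_finset]
  refine Finset.sum_congr rfl fun r _ => ?_
  rw [MultilinearMap.map_smul_univ, smul_eq_mul]
  rfl

section CompartmentModel

open Finset

variable {V : Type*} [DecidableEq V] {R : Type*}

theorem sum_augEdges {S : Type*} [AddCommMonoid S] (M : LinCompModel V R)
    (g : Option V × Option V → S) :
    ∑ e ∈ augEdges M, g e =
      ∑ e ∈ M.edges, g (some e.1, some e.2) + ∑ i ∈ M.leak, g (some i, none) := by
  rw [augEdges, sum_union, sum_image, sum_image]
  · simp
  · intro a _ b _ h; simpa [Prod.ext_iff] using h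
  · simp only [disjoint_left, mem_image]
    rintro _ ⟨_, -, rfl⟩ ⟨_, -, h⟩
    simp at h

theorem augEdges_fst_ne_none (M : LinCompModel V R) :
    ∀ e ∈ augEdges M, e.1 ≠ none := by
  intro e he
  rcases mem_union.mp he with h | h <;> obtain ⟨_, -, rfl⟩ := mem_image.mp h <;> simp

theorem compMatrix_apply_eq_sum [Fintype V] [CommRing R] (M : LinCompModel V R) (i j : V) :
    compMatrix M i j = ∑ e ∈ (augEdges M).filter (·.1 = some j),
      augLabel M e * ((if e.2 = some i then 1 else 0) - if i = j then 1 else 0) := by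
  rw [sum_filter, sum_augEdges]
  by_cases hij : i = j
  · subst hij
    have hsum : ∑ e ∈ M.edges, (if e.1 = i then M.label e * ((if e.2 = i then 1 else 0) - 1)
        else 0) = -∑ e ∈ M.edges with e.1 = i, M.label e := by
      rw [sum_filter, ← sum_neg_distrib]
      refine sum_congr rfl fun e he => ?_
      by_cases h1 : e.1 = i
      · simp [h1, (h1 ▸ M.no_loops e he).symm]
      · simp [h1]
    simp only [compMatrix, augLabel, Matrix.of_apply, if_true, Option.some_inj, reduceCtorEq,
      if_false, zero_sub, mul_neg, mul_one, sum_ite_eq', hsum]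
    split_ifs <;> ring
  · simp only [compMatrix, augLabel, Matrix.of_apply, hij, if_false, Option.some_inj, reduceCtorEq,
      sub_zero, mul_ite, mul_one, mul_zero, ite_self, sum_const_zero, add_zero]
    rw [← Finset.sum_ite_eq' M.edges (j, i) M.label]
    refine sum_congr rfl fun e _ => ?_
    obtain ⟨a, b⟩ := e
    by_cases ha : a = j <;> by_cases hb : b = i <;> simp [ha, hb]

end CompartmentModel

section Choices

open Finset

variable {V : Type*}

theorem pairwise_disjoint_toFinset_of_fst_eq {r : V → Option (Option V × Option V)}
    (hr : ∀ j e, r j = some e → e.1 = some j) :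
    Pairwise (Function.onFun Disjoint fun j => (r j).toFinset) := by
  intro j j' hjj'
  simp only [Function.onFun, disjoint_left, Option.mem_toFinset, Option.mem_def]
  intro e hj hj'
  exact hjj' (Option.some_inj.mp ((hr j e hj).symm.trans (hr j' e hj')))

variable [DecidableEq V]

-- `none` stands for the `X` on the diagonal of column `j`, `some e` for an edge `e ∈ E` out of `j`.
def outChoices (E : Finset (Option V × Option V)) (j : V) :
    Finset (Option (Option V × Option V)) :=
  insert none ((E.filter (·.1 = some j)).image some)

noncomputable def outEdge (F : Finset (Option V × Option V)) (j : V) :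
    Option (Option V × Option V) :=
  if h : ∃ e ∈ F, e.1 = some j then some h.choose else none

theorem outEdge_eq_some_iff {F : Finset (Option V × Option V)}
    (hF : Set.InjOn Prod.fst (F : Set (Option V × Option V))) {j : V} {e : Option V × Option V} :
    outEdge F j = some e ↔ e ∈ F ∧ e.1 = some j := by
  unfold outEdge
  split_ifs with h
  · refine ⟨?_, fun he => ?_⟩
    · rintro ⟨⟩; exact h.choose_spec
    · exact congrArg some (hF h.choose_spec.1 he.1 (h.choose_spec.2.trans he.2.symm))
  · simpa using fun he hej => h ⟨e, he, hej⟩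

variable [Fintype V]

def edgesOf (r : V → Option (Option V × Option V)) : Finset (Option V × Option V) :=
  univ.biUnion fun j => (r j).toFinset

theorem mem_edgesOf {r : V → Option (Option V × Option V)} {e : Option V × Option V} :
    e ∈ edgesOf r ↔ ∃ j, r j = some e := by
  simp [edgesOf]

theorem mem_piFinset_outChoices {E : Finset (Option V × Option V)}
    {r : V → Option (Option V × Option V)} :
    r ∈ Fintype.piFinset (outChoices E) ↔ ∀ j e, r j = some e → e ∈ E ∧ e.1 = some j := by
  simp only [Fintype.mem_piFinset, outChoices, mem_insert, mem_image, mem_filter]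
  refine forall_congr' fun j => ?_
  cases r j <;> simp

variable {r : V → Option (Option V × Option V)}

theorem injOn_fst_edgesOf (hr : ∀ j e, r j = some e → e.1 = some j) :
    Set.InjOn Prod.fst (edgesOf r : Set (Option V × Option V)) := by
  intro e he e' he' h
  obtain ⟨j, hj⟩ := mem_edgesOf.mp he
  obtain ⟨j', hj'⟩ := mem_edgesOf.mp he'
  obtain rfl : j = j' := Option.some_inj.mp ((hr j e hj).symm.trans (h.trans (hr j' e' hj')))
  exact Option.some_inj.mp (hj.symm.trans hj')

theorem card_edgesOf (hr : ∀ j e, r j = some e → e.1 = some j) :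
    #(edgesOf r) = #{j | r j ≠ none} := by
  rw [edgesOf, card_biUnion ((pairwise_disjoint_toFinset_of_fst_eq hr).set_pairwise _),
    card_filter]
  refine sum_congr rfl fun j _ => ?_
  cases r j <;> simp

theorem prod_edgesOf {M : Type*} [CommMonoid M] (hr : ∀ j e, r j = some e → e.1 = some j)
    (w : Option V × Option V → M) :
    ∏ e ∈ edgesOf r, w e = ∏ j, (r j).elim 1 w := by
  rw [edgesOf, prod_biUnion ((pairwise_disjoint_toFinset_of_fst_eq hr).set_pairwise _)]
  refine prod_congr rfl fun j _ => ?_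
  cases r j <;> simp

theorem forall_not_transGen_edgesOf_iff (hr : ∀ j e, r j = some e → e.1 = some j) :
    (∀ w, ¬ TransGen (fun x y => (x, y) ∈ edgesOf r) w w) ↔
      ∀ a, ¬ TransGen (fun a b => (r a).bind Prod.snd = some b) a a := by
  have hsome : ∀ a b, (some a, some b) ∈ edgesOf r ↔ (r a).bind Prod.snd = some b := by
    intro a b
    rw [mem_edgesOf]
    constructor
    · rintro ⟨j, hj⟩
      obtain rfl : j = a := Option.some_inj.mp (hr j _ hj).symm
      simp [hj]
    · intro h
      obtain ⟨e, he, hb⟩ := Option.bind_eq_some_iff.mp h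
      exact ⟨a, by rw [he, ← hr a e he, ← hb]⟩
  rw [Relation.forall_not_transGen_option_iff]
  · simp only [hsome]
  · intro y hy
    obtain ⟨j, hj⟩ := mem_edgesOf.mp hy
    exact absurd (hr j _ hj) (by simp)

theorem sum_piFinset_outChoices {S : Type*} [AddCommMonoid S] {E : Finset (Option V × Option V)}
    (hE : ∀ e ∈ E, e.1 ≠ none) (g : Finset (Option V × Option V) → S) :
    ∑ r ∈ Fintype.piFinset (outChoices E), g (edgesOf r) =
      ∑ F ∈ E.powerset.filter fun F : Finset (Option V × Option V) =>
        Set.InjOn Prod.fst (F : Set (Option V × Option V)), g F := by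
  refine sum_nbij' edgesOf outEdge (fun r hr => ?_) (fun F hF => ?_) (fun r hr => ?_)
    (fun F hF => ?_) fun _ _ => rfl
  · rw [mem_piFinset_outChoices] at hr
    refine mem_filter.mpr ⟨mem_powerset.mpr fun e he => ?_,
      injOn_fst_edgesOf fun j e h => (hr j e h).2⟩
    obtain ⟨j, hj⟩ := mem_edgesOf.mp he
    exact (hr j e hj).1
  · obtain ⟨hFE, hF⟩ := mem_filter.mp hF
    refine mem_piFinset_outChoices.mpr fun j e he => ?_
    obtain ⟨heF, hej⟩ := (outEdge_eq_some_iff hF).mp he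
    exact ⟨mem_powerset.mp hFE heF, hej⟩
  · rw [mem_piFinset_outChoices] at hr
    funext j
    refine Option.ext fun e => ?_
    rw [outEdge_eq_some_iff (injOn_fst_edgesOf fun j e h => (hr j e h).2), mem_edgesOf]
    constructor
    · rintro ⟨⟨j', hj'⟩, hej⟩
      rwa [Option.some_inj.mp ((hr j' e hj').2.symm.trans hej)] at hj'
    · exact fun hj => ⟨⟨j, hj⟩, (hr j e hj).2⟩
  · obtain ⟨hFE, hF⟩ := mem_filter.mp hF
    ext e
    rw [mem_edgesOf]
    constructor
    · rintro ⟨j, hj⟩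
      exact ((outEdge_eq_some_iff hF).mp hj).1
    · intro he
      obtain ⟨j, hj⟩ := Option.ne_none_iff_exists'.mp (hE e (mem_powerset.mp hFE he))
      exact ⟨j, (outEdge_eq_some_iff hF).mpr ⟨he, hj⟩⟩

theorem forestSum_eq_sum_piFinset_outChoices {R : Type*} [CommRing R]
    {E : Finset (Option V × Option V)} (hE : ∀ e ∈ E, e.1 ≠ none) (w : Option V × Option V → R)
    (k : ℕ) :
    forestSum E w k = ∑ r ∈ Fintype.piFinset (outChoices E),
      if (∀ a, ¬ TransGen (fun a b => (r a).bind Prod.snd = some b) a a) ∧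
          #{j | r j ≠ none} = k
        then ∏ j, (r j).elim 1 w else 0 := by
  have hfilter : E.powerset.filter (fun F => #F = k ∧ IsIncomingForest F) =
      (E.powerset.filter fun F : Finset (Option V × Option V) =>
        Set.InjOn Prod.fst (F : Set (Option V × Option V))).filter
          fun F => #F = k ∧ IsIncomingForest F := by
    rw [filter_filter]
    exact filter_congr fun F _ => ⟨fun h => ⟨(isIncomingForest_iff.mp h.2).1, h⟩, And.right⟩
  rw [forestSum, hfilter, sum_filter, ← sum_piFinset_outChoices hE]
  refine sum_congr rfl fun r hr => ?_
  have hr : ∀ j e, r j = some e → e.1 = some j :=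
    fun j e h => (mem_piFinset_outChoices.mp hr j e h).2
  simp only [isIncomingForest_iff, injOn_fst_edgesOf hr, forall_not_transGen_edgesOf_iff hr,
    card_edgesOf hr, prod_edgesOf hr, true_and, and_comm]

end Choices

section Charpoly

open Polynomial Finset Matrix

theorem prod_option_elim_X_C {ι β R : Type*} [Fintype ι] [CommRing R] (r : ι → Option β)
    (w : β → R) :
    ∏ j, (r j).elim X (fun e => C (w e)) = C (∏ j, (r j).elim 1 w) * X ^ #{j | r j = none} := by
  have h : ∀ j, (r j).elim X (fun e => C (w e)) =
      C ((r j).elim 1 w) * X ^ (if r j = none then 1 else 0) := by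
    intro j
    cases r j <;> simp
  rw [prod_congr rfl fun j _ => h j, prod_mul_distrib, map_prod, prod_pow_eq_pow_sum, card_filter]

variable {V : Type*} [Fintype V] [DecidableEq V] {R : Type*} [CommRing R]

theorem charmatrix_compMatrix_transpose (M : LinCompModel V R) :
    (charmatrix (compMatrix M))ᵀ = Matrix.of fun j => ∑ o ∈ outChoices (augEdges M) j,
      o.elim X (fun e => C (augLabel M e)) •
        fun i => (1 : Matrix V V R[X]) j i - if o.bind Prod.snd = some i then 1 else 0 := by
  refine Matrix.ext fun j i => ?_
  rw [transpose_apply, charmatrix_apply, compMatrix_apply_eq_sum, of_apply,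
    outChoices, sum_insert (by simp), sum_image (by simp)]
  simp only [Option.elim, Option.bind, Pi.add_apply, Finset.sum_apply, Pi.smul_apply, smul_eq_mul,
    reduceCtorEq, if_false, sub_zero, map_sum, map_mul, map_sub, apply_ite C, map_one, map_zero,
    one_apply, diagonal_apply, eq_comm (a := i)]
  rw [sub_eq_add_neg, ← sum_neg_distrib]
  congr 1
  · split_ifs <;> ring
  · exact sum_congr rfl fun e _ => by ring

theorem charpoly_compMatrix (M : LinCompModel V R) :
    (compMatrix M).charpoly = ∑ r ∈ Fintype.piFinset (outChoices (augEdges M)),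
      C (∏ j, (r j).elim 1 (augLabel M)) * X ^ #{j | r j = none} *
        if ∀ a, ¬ TransGen (fun a b => (r a).bind Prod.snd = some b) a a then 1 else 0 := by
  rw [Matrix.charpoly, ← det_transpose, charmatrix_compMatrix_transpose, det_of_sum_smul_rows]
  refine sum_congr rfl fun r _ => ?_
  rw [prod_option_elim_X_C, ← det_one_sub_partialFunMatrix]
  rfl

theorem coeff_charpoly_compMatrix (M : LinCompModel V R) (k : ℕ) :
    (compMatrix M).charpoly.coeff k = ∑ r ∈ Fintype.piFinset (outChoices (augEdges M)),
      if (∀ a, ¬ TransGen (fun a b => (r a).bind Prod.snd = some b) a a) ∧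
          #{j | r j = none} = k
        then ∏ j, (r j).elim 1 (augLabel M) else 0 := by
  rw [charpoly_compMatrix, Polynomial.finsetSum_coeff]
  refine sum_congr rfl fun r _ => ?_
  by_cases h : ∀ a, ¬ TransGen (fun a b => (r a).bind Prod.snd = some b) a a
  · rw [if_pos h, mul_one, Polynomial.coeff_C_mul_X_pow]
    exact if_congr ⟨fun hk => ⟨h, hk.symm⟩, fun hk => hk.2.symm⟩ rfl rfl
  · rw [if_neg h, mul_zero, Polynomial.coeff_zero, if_neg fun h' => h h'.1]

end Charpoly

/-- Writing `det (λ I - A) = λ^n + e_{n-1} λ^{n-1} + ⋯ + e_0` for the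
compartmental matrix `A` of a linear compartment model with `n` compartments, each
coefficient `e_i` (for `i < n`) equals the sum, over all spanning incoming forests of the
leak-augmented graph `G̃` with exactly `n - i` edges, of the products of the edge labels. -/
theorem compMatrix_charpoly_coeff_eq_forestSum {R : Type*} [CommRing R] {n : ℕ}
    (M : LinCompModel (Fin n) R) (i : ℕ) (hi : i < n) :
    (compMatrix M).charpoly.coeff i = forestSum (augEdges M) (augLabel M) (n - i) := by
  rw [coeff_charpoly_compMatrix, forestSum_eq_sum_piFinset_outChoices (augEdges_fst_ne_none M)]
  refine Finset.sum_congr rfl fun r _ => ?_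
  have hcard : (Finset.univ.filter (r · = none)).card +
      (Finset.univ.filter (r · ≠ none)).card = n :=
    (Finset.card_filter_add_card_filter_not _).trans (Finset.card_fin n)
  have hnone : (Finset.univ.filter (r · = none)).card = i ↔
      (Finset.univ.filter (r · ≠ none)).card = n - i := by
    omega
  split_ifs <;> tauto
end

section
/- Let G be a directed graph on n vertices whose edge i→j is labeled b_{ji} (labels in a commutative ring), and let L be its Laplacian matrix. Write det(λI − L) = λ^n + e_{n−1}λ^{n−1} + ⋯ + e_0. Then for each i = 0, 1, …, n−1, e_i = (−1)^{n−i} Σ_{F ∈ 𝓕_{n−i}(G)} π_F, the sum being over all spanning incoming forests of G with exactly n−i edges. In particular, e_0 = 0. -/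
open scoped Classical

/-- The Laplacian matrix of a labelled directed graph with edge set `E` and labels `w`
(the label of the edge `i → j` is `b_{ji} = w (i, j)`): the `(i,j)` off-diagonal entry is
`-b_{ji}` and the `(i,i)` diagonal entry is the sum of the labels of the edges leaving `i`. -/
noncomputable def digraphLaplacian {V R : Type*} [Fintype V] [DecidableEq V] [CommRing R]
    (E : Finset (V × V)) (w : V × V → R) : Matrix V V R :=
  Matrix.of fun i j =>
    if i = j then ∑ e ∈ E.filter (fun e => e.1 = i ∧ e.2 ≠ i), w e
    else -(if (i, j) ∈ E then w (i, j) else 0)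

/-!
Since the rows of `L` sum to zero, row `i` of `λ - L` is `λ eᵢ + ∑ⱼ Lᵢⱼ (eᵢ - eⱼ)`. Expanding the
determinant row by row, each term chooses for every vertex `i` either `λ eᵢ` or one edge `i → j`,
that is, a partial map `r : V → Option V`. The matrix with rows `eᵢ` and `eᵢ - e_{r i}` has
determinant `1` when iterating `r` always stops and `0` otherwise, and iterating `r` always stops
exactly when the edges `i → r i` form an incoming forest. The terms with `n - i` edges carry
`λ ^ i`. Finally `e₀ = ± det L = 0` because `L 1 = 0`.
-/

open Finset Matrix

section

variable {V : Type*} [DecidableEq V] {R : Type*} [CommRing R]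

/-- `succRel r j i` says that `j = r i`; the argument order makes `WellFounded (succRel r)` mean
that iterating `r` from any point stops. -/
def succRel (r : V → Option V) (j i : V) : Prop := r i = some j

def succMatrix (r : V → Option V) : Matrix V V R :=
  of fun i => Pi.single i 1 - (r i).elim 0 fun j => Pi.single j 1

theorem succMatrix_apply (r : V → Option V) (i j : V) :
    succMatrix (R := R) r i j = (if i = j then 1 else 0) - if r i = some j then 1 else 0 := by
  cases h : r i <;> simp [succMatrix, h, Pi.single_apply, eq_comm]

variable [Fintype V]

theorem succMatrix_mulVec (r : V → Option V) (x : V → R) :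
    succMatrix r *ᵥ x = fun i => x i - (r i).elim 0 x := by
  ext i
  simp only [succMatrix, mulVec, of_apply, sub_dotProduct, single_one_dotProduct]
  cases r i <;> simp

theorem det_succMatrix_of_not_wellFounded {r : V → Option V} (hr : ¬WellFounded (succRel r)) :
    (succMatrix r : Matrix V V R).det = 0 := by
  obtain ⟨i, hi⟩ := not_forall.1 (mt WellFounded.intro hr)
  -- the indicator of the points from which iterating `r` never stops lies in the kernel
  refine det_eq_zero_of_mulVec_eq_zero_of_mem_nonZeroDivisors
    (v := fun i => if Acc (succRel r) i then 0 else 1) (funext fun k => ?_) (i := i)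
    (by simp [hi])
  rw [succMatrix_mulVec]
  cases h : r k with
  | none =>
    have : Acc (succRel r) k := ⟨k, fun l hl => by simp [succRel, h] at hl⟩
    simp [h, this]
  | some j =>
    have : Acc (succRel r) k ↔ Acc (succRel r) j :=
      ⟨fun hk => hk.inv h,
        fun hj => ⟨_, fun l hl => Option.some_injective _ (hl.symm.trans h) ▸ hj⟩⟩
    simp [h, this]

theorem det_succMatrix_of_wellFounded {r : V → Option V} (hr : WellFounded (succRel r)) :
    (succMatrix r : Matrix V V R).det = 1 := by
  have : IsWellFounded V (succRel r) := ⟨hr⟩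
  -- ordered by decreasing rank, the matrix is unitriangular
  let b : V → (Ordinal)ᵒᵈ := fun i => OrderDual.toDual (IsWellFounded.rank (succRel r) i)
  have hb : ∀ {i j}, r i = some j → b i < b j := fun h =>
    IsWellFounded.rank_lt_of_rel (r := succRel r) h
  have htri : (succMatrix r : Matrix V V R).BlockTriangular b := fun i j hji => by
    rw [succMatrix_apply, if_neg (fun h => (h ▸ hji).false), if_neg (fun h => (hb h).asymm hji),
      sub_zero]
  have hblock : ∀ a, (succMatrix r : Matrix V V R).toSquareBlock b a = 1 := fun a => by
    ext ⟨i, hi⟩ ⟨j, hj⟩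
    have : r i ≠ some j := fun h => (hb h).ne (hi.trans hj.symm)
    simp [toSquareBlock_def, succMatrix_apply, one_apply, this]
  rw [htri.det, prod_congr rfl fun a _ => by rw [hblock, det_one], prod_const_one]

theorem det_succMatrix (r : V → Option V) :
    (succMatrix r : Matrix V V R).det = if WellFounded (succRel r) then 1 else 0 := by
  split_ifs with hr
  exacts [det_succMatrix_of_wellFounded hr, det_succMatrix_of_not_wellFounded hr]

def succEdges (r : V → Option V) : Finset (V × V) := univ.filter fun e => r e.1 = some e.2

@[simp]
theorem mem_succEdges {r : V → Option V} {e : V × V} : e ∈ succEdges r ↔ r e.1 = some e.2 := by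
  simp [succEdges]

theorem isAcyclic_of_wellFounded {r : V → Option V} (hr : WellFounded (succRel r)) :
    (SimpleGraph.fromRel fun u v => (u, v) ∈ succEdges r).IsAcyclic := by
  intro u c hc
  have : IsWellFounded V (succRel r) := ⟨hr⟩
  let rank := IsWellFounded.rank (succRel r)
  obtain ⟨v, hv, hmax⟩ := c.support.toFinset.exists_max_image rank ⟨u, by simp⟩
  rw [List.mem_toFinset] at hv
  let c' := c.rotate v hv
  have hc' : c'.IsCycle := hc.rotate hv
  -- a vertex of maximal rank on the cycle has no predecessor there, so both of its
  -- neighbours on the cycle are its successor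
  have hsucc : ∀ n, (SimpleGraph.fromRel fun u v => (u, v) ∈ succEdges r).Adj v (c'.getVert n) →
      r v = some (c'.getVert n) := by
    intro n hadj
    have hmem : c'.getVert n ∈ c.support :=
      (c.mem_support_rotate_iff v hv).1 (c'.getVert_mem_support n)
    rcases ((SimpleGraph.fromRel_adj _ _ _).1 hadj).2 with h | h
    · simpa using h
    · exact absurd (hmax _ (List.mem_toFinset.2 hmem))
        (not_le.2 (IsWellFounded.rank_lt_of_rel (r := succRel r) (by simpa [succRel] using h)))
  have h1 := hsucc 1 (c'.adj_snd hc'.not_nil)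
  have h2 := hsucc (c'.length - 1) (c'.adj_penultimate hc'.not_nil).symm
  exact hc'.snd_ne_penultimate (Option.some_injective _ (h1.symm.trans h2))

theorem exists_isPath_of_not_acc {r : V → Option V} (hF : IsIncomingForest (succEdges r))
    {y₀ : V} (hy₀ : ¬Acc (succRel r) y₀) (k : ℕ) :
    ∃ (x y : V) (p : (SimpleGraph.fromRel fun u v => (u, v) ∈ succEdges r).Walk x y),
      p.IsPath ∧ p.length = k ∧ ¬Acc (succRel r) y ∧ ∀ z, r y = some z → z ∉ p.support := by
  obtain ⟨hloop, hsymm, hacyc, -⟩ := hF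
  have hadj : ∀ {y z}, r y = some z →
      (SimpleGraph.fromRel fun u v => (u, v) ∈ succEdges r).Adj y z := fun h =>
    (SimpleGraph.fromRel_adj _ _ _).2
      ⟨hloop (_, _) (mem_succEdges.2 h), Or.inl (mem_succEdges.2 h)⟩
  induction k with
  | zero =>
    refine ⟨y₀, y₀, .nil, .nil, rfl, hy₀, fun z hz hmem => ?_⟩
    exact hloop (_, _) (mem_succEdges.2 hz) (by simp_all)
  | succ k ih =>
    obtain ⟨x, y, p, hp, hlen, hy, hnew⟩ := ih
    obtain ⟨z, hyz, hz⟩ : ∃ z, r y = some z ∧ ¬Acc (succRel r) z := by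
      by_contra! h
      exact hy ⟨y, h⟩
    refine ⟨x, z, p.concat (hadj hyz), hp.concat (hnew z hyz) _, by simp [hlen], hz,
      fun z' hzz' hmem => ?_⟩
    have := hacyc.eq_penultimate_of_adj_end (hp.concat (hnew z hyz) _) (hadj hzz') hmem
    rw [SimpleGraph.Walk.penultimate_concat] at this
    subst this
    exact hsymm (_, _) (mem_succEdges.2 hyz) (mem_succEdges.2 hzz')

theorem wellFounded_of_isIncomingForest {r : V → Option V}
    (hF : IsIncomingForest (succEdges r)) : WellFounded (succRel r) := by
  by_contra hr
  obtain ⟨y₀, hy₀⟩ := not_forall.1 (mt WellFounded.intro hr)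
  obtain ⟨x, y, p, hp, hlen, -⟩ := exists_isPath_of_not_acc hF hy₀ (Fintype.card V)
  exact (hlen ▸ hp.length_lt).false

theorem isIncomingForest_succEdges_iff {r : V → Option V} :
    IsIncomingForest (succEdges r) ↔ WellFounded (succRel r) := by
  refine ⟨wellFounded_of_isIncomingForest, fun hr => ⟨?_, ?_, isAcyclic_of_wellFounded hr, ?_⟩⟩
  · rintro ⟨i, j⟩ h (rfl : i = j)
    exact hr.asymmetric _ _ (mem_succEdges.1 h) (mem_succEdges.1 h)
  · rintro ⟨i, j⟩ h h'
    exact hr.asymmetric _ _ (mem_succEdges.1 h) (mem_succEdges.1 h')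
  · rintro ⟨i, j⟩ h ⟨i', j'⟩ h' (rfl : i = i')
    simp only [mem_succEdges] at h h'
    rw [h', Option.some_inj] at h
    rw [h]

theorem exists_succEdges_eq {F : Finset (V × V)} (hF : ∀ e ∈ F, ∀ e' ∈ F, e.1 = e'.1 → e = e') :
    ∃ r : V → Option V, succEdges r = F := by
  have (i : V) : ∃ o : Option V, ∀ j, o = some j ↔ (i, j) ∈ F := by
    by_cases h : ∃ j, (i, j) ∈ F
    · obtain ⟨j, hj⟩ := h
      exact ⟨some j, fun k => ⟨fun hk => Option.some_injective _ hk ▸ hj,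
        fun hk => congrArg (some ∘ Prod.snd) (hF _ hj _ hk rfl)⟩⟩
    · exact ⟨none, fun j => by simpa using fun hj => h ⟨j, hj⟩⟩
  choose r hr using this
  exact ⟨r, Finset.ext fun e => by simp [hr]⟩

theorem sum_wellFounded_eq_sum_isIncomingForest {M : Type*} [AddCommMonoid M]
    (φ : Finset (V × V) → M) :
    ∑ r : V → Option V with WellFounded (succRel r), φ (succEdges r) =
      ∑ F : Finset (V × V) with IsIncomingForest F, φ F := by
  refine sum_bij (fun r _ => succEdges r) (fun r hr => ?_) (fun r _ r' _ h => ?_)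
    (fun F hF => ?_) (fun _ _ => rfl)
  · simpa [isIncomingForest_succEdges_iff] using hr
  · funext i
    exact Option.ext fun j => by simpa using congrArg ((i, j) ∈ ·) h
  · obtain ⟨r, rfl⟩ := exists_succEdges_eq (mem_filter.1 hF).2.2.2.2
    exact ⟨r, by simpa [isIncomingForest_succEdges_iff] using hF, rfl⟩

@[to_additive]
theorem prod_succEdges {M : Type*} [CommMonoid M] (r : V → Option V) (f : V × V → M) :
    ∏ e ∈ succEdges r, f e = ∏ i, (r i).elim 1 fun j => f (i, j) := by
  rw [succEdges, prod_filter, Fintype.prod_prod_type]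
  refine prod_congr rfl fun i _ => ?_
  cases h : r i <;> simp [h]

theorem card_succEdges_add_card_none (r : V → Option V) :
    #(succEdges r) + #{i | r i = none} = Fintype.card V := by
  rw [card_eq_sum_ones, sum_succEdges, card_filter, ← sum_add_distrib, ← card_univ,
    card_eq_sum_ones]
  refine sum_congr rfl fun i _ => ?_
  cases r i <;> rfl

open Polynomial in
theorem charpoly_eq_sum_wellFounded (M : Matrix V V R) (hM : ∀ i, ∑ j, M i j = 0) :
    M.charpoly = ∑ r : V → Option V with WellFounded (succRel r),
      C (∏ e ∈ succEdges r, M e.1 e.2) * X ^ (Fintype.card V - #(succEdges r)) := by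
  let c (i : V) (o : Option V) : R[X] := o.elim X fun j => C (M i j)
  have hrow : ∀ i, charmatrix M i =
      ∑ o, c i o • (Pi.single i 1 - o.elim 0 fun j => Pi.single j 1) := fun i => by
    funext j
    rw [Fintype.sum_option]
    by_cases hij : j = i
    · subst hij
      simp [c, Finset.sum_apply, Pi.single_apply, sum_add_distrib, ← map_sum, hM,
        sub_eq_add_neg]
    · simp [c, Finset.sum_apply, Pi.single_apply, hij, Ne.symm hij]
  have hprod : ∀ r : V → Option V, ∏ i, c i (r i) =
      C (∏ e ∈ succEdges r, M e.1 e.2) * X ^ (Fintype.card V - #(succEdges r)) := fun r => by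
    have hsplit : ∀ i, c i (r i) = C ((r i).elim 1 (M i)) * if r i = none then X else 1 := by
      intro i
      cases r i <;> simp [c]
    rw [← card_succEdges_add_card_none r, Nat.add_sub_cancel_left, ← prod_const, prod_filter,
      prod_succEdges, map_prod, ← prod_mul_distrib]
    exact prod_congr rfl fun i _ => hsplit i
  have hdet :
      (charmatrix M).det = ∑ r : V → Option V, (∏ i, c i (r i)) • (succMatrix r).det := by
    calc (charmatrix M).det
        = detRowAlternating fun i =>
            ∑ o, c i o • (Pi.single i 1 - o.elim 0 fun j => Pi.single j 1) :=
          congrArg detRowAlternating (funext hrow)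
      _ = ∑ r : V → Option V, (detRowAlternating fun i =>
            c i (r i) • (Pi.single i 1 - (r i).elim 0 fun j => Pi.single j 1)) :=
          detRowAlternating.toMultilinearMap.map_sum _
      _ = _ := sum_congr rfl fun r _ => detRowAlternating.map_smul_univ _ _
  rw [charpoly, hdet, sum_filter]
  refine sum_congr rfl fun r _ => ?_
  rw [hprod, det_succMatrix]
  split_ifs <;> simp

theorem coeff_charpoly_eq_sum_isIncomingForest (M : Matrix V V R) (hM : ∀ i, ∑ j, M i j = 0)
    {k : ℕ} (hk : k ≤ Fintype.card V) :
    M.charpoly.coeff k =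
      ∑ F : Finset (V × V) with F.card = Fintype.card V - k ∧ IsIncomingForest F,
        ∏ e ∈ F, M e.1 e.2 := by
  calc M.charpoly.coeff k
      = ∑ r : V → Option V with WellFounded (succRel r),
          if #(succEdges r) = Fintype.card V - k then ∏ e ∈ succEdges r, M e.1 e.2 else 0 := by
        rw [charpoly_eq_sum_wellFounded M hM, Polynomial.finsetSum_coeff]
        refine sum_congr rfl fun r _ => ?_
        have := card_succEdges_add_card_none r
        rw [Polynomial.coeff_C_mul_X_pow]
        exact if_congr (by omega) rfl rfl
    _ = ∑ F : Finset (V × V) with IsIncomingForest F,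
          if F.card = Fintype.card V - k then ∏ e ∈ F, M e.1 e.2 else 0 :=
        sum_wellFounded_eq_sum_isIncomingForest fun F =>
          if F.card = Fintype.card V - k then ∏ e ∈ F, M e.1 e.2 else 0
    _ = _ := by rw [← sum_filter, filter_filter]; simp only [and_comm]

theorem coeff_charpoly_zero_eq_zero [Nonempty V] (M : Matrix V V R) (hM : ∀ i, ∑ j, M i j = 0) :
    M.charpoly.coeff 0 = 0 := by
  have hdet : M.det = 0 := det_eq_zero_of_mulVec_eq_zero_of_mem_nonZeroDivisors (v := 1)
    (funext fun i => by simp [mulVec, dotProduct, hM]) (i := Classical.arbitrary V)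
    (by simp)
  simpa [hdet] using (det_eq_sign_charpoly_coeff M).symm

theorem sum_digraphLaplacian_row (E : Finset (V × V)) (w : V × V → R) (i : V) :
    ∑ j, digraphLaplacian E w i j = 0 := by
  have hout : ∑ e ∈ E with e.1 = i ∧ e.2 ≠ i, w e =
      ∑ j ∈ univ.erase i, if (i, j) ∈ E then w (i, j) else 0 := by
    rw [← sum_filter]
    refine sum_nbij' Prod.snd (Prod.mk i) ?_ ?_ ?_ ?_ ?_ <;> aesop
  have hoff : ∀ j ∈ univ.erase i,
      digraphLaplacian E w i j = -if (i, j) ∈ E then w (i, j) else 0 := fun j hj => by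
    simp [digraphLaplacian, (ne_of_mem_erase hj).symm]
  rw [← add_sum_erase _ _ (mem_univ i), sum_congr rfl hoff, sum_neg_distrib, ← hout]
  simp [digraphLaplacian]

theorem prod_digraphLaplacian_of_ne (E : Finset (V × V)) (w : V × V → R)
    {F : Finset (V × V)} (hF : ∀ e ∈ F, e.1 ≠ e.2) :
    ∏ e ∈ F, digraphLaplacian E w e.1 e.2 =
      (-1) ^ F.card * if F ⊆ E then ∏ e ∈ F, w e else 0 := by
  have he : ∀ e ∈ F, digraphLaplacian E w e.1 e.2 = -1 * if e ∈ E then w e else 0 :=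
    fun e he => by
      simp only [digraphLaplacian, of_apply, if_neg (hF e he), Prod.mk.eta, neg_one_mul]
  rw [prod_congr rfl he, prod_mul_distrib, prod_const, prod_ite_zero]
  rfl

theorem sum_isIncomingForest_prod_digraphLaplacian (E : Finset (V × V)) (w : V × V → R) (m : ℕ) :
    ∑ F : Finset (V × V) with F.card = m ∧ IsIncomingForest F,
      ∏ e ∈ F, digraphLaplacian E w e.1 e.2 = (-1) ^ m * forestSum E w m := by
  rw [forestSum, mul_sum, sum_congr rfl fun F hF =>
    prod_digraphLaplacian_of_ne E w (mem_filter.1 hF).2.2.1]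
  simp only [mul_ite, mul_zero]
  rw [← sum_filter, filter_filter]
  refine sum_congr (ext fun F => ?_) fun F hF => by rw [(mem_filter.1 hF).2.1]
  simp only [mem_filter, mem_univ, mem_powerset, true_and]
  tauto

end

theorem laplacian_charpoly_coeff_general {R : Type*} [CommRing R] {n : ℕ}
    (E : Finset (Fin n × Fin n)) (w : Fin n × Fin n → R) :
    (∀ i < n, (digraphLaplacian E w).charpoly.coeff i
        = (-1 : R) ^ (n - i) * forestSum E w (n - i)) ∧
      (0 < n → (digraphLaplacian E w).charpoly.coeff 0 = 0) := by
  refine ⟨fun i hi => ?_, fun hn => ?_⟩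
  · rw [coeff_charpoly_eq_sum_isIncomingForest _ (sum_digraphLaplacian_row E w)
      (by simpa using hi.le), Fintype.card_fin, sum_isIncomingForest_prod_digraphLaplacian]
  · have : Nonempty (Fin n) := ⟨⟨0, hn⟩⟩
    exact coeff_charpoly_zero_eq_zero _ (sum_digraphLaplacian_row E w)

/-- Buslov. Writing `det (λ I - L) = λ^n + e_{n-1} λ^{n-1} + ⋯ + e_0`
for the Laplacian `L` of a directed graph `G` on `n` vertices, one has
`e_i = (-1)^{n-i} Σ_{F ∈ 𝓕_{n-i}(G)} π_F` for each `i < n`; in particular `e_0 = 0`. -/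
theorem laplacian_charpoly_coeff {R : Type*} [CommRing R] {n : ℕ}
    (E : Finset (Fin n × Fin n)) (w : Fin n × Fin n → R)
    (hE : ∀ e ∈ E, e.1 ≠ e.2) :
    (∀ i < n, (digraphLaplacian E w).charpoly.coeff i
        = (-1 : R) ^ (n - i) * forestSum E w (n - i)) ∧
      (0 < n → (digraphLaplacian E w).charpoly.coeff 0 = 0) :=
  laplacian_charpoly_coeff_general E w
end

section
/- Let d_1, …, d_m be polynomials in ℝ[x_1,…,x_m], let Jac(d) be the m×m matrix with (s,j) entry ∂d_s/∂x_j, and let I ⊆ {1,…,m}. Suppose that the polynomial obtained from det(Jac(d)) by substituting x_i = 0 for all i ∈ I is not the zero polynomial. Then there exists a subset S ⊆ {1,…,m} with |S| = m − |I| such that the determinant of the (m−|I|)×(m−|I|) matrix whose (s,j) entry (s ∈ S, j ∉ I) is ∂d̃_s/∂x_j is not the zero polynomial, where d̃_s ∈ ℝ[x_j : j ∉ I] denotes d_s with x_i = 0 substituted for all i ∈ I. -/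
/-!
Substituting `x_i = 0` for `i ∈ I` is a ring map, so it commutes with the determinant: the
substituted Jacobian has nonzero determinant, hence over the fraction field its columns indexed by
the complement of `I` are linearly independent, and some choice of `m - |I|` rows gives a nonzero
maximal minor. Differentiation in a variable `x_j` with `j ∉ I` commutes with the substitution,
so that minor is exactly the Jacobian of the substituted polynomials.
-/

open MvPolynomial Matrix

namespace Matrix

theorem exists_det_submatrix_ne_zero_of_linearIndependent_cols {K m k : Type*} [Field K]
    [Fintype m] [Fintype k] [DecidableEq k] (A : Matrix m k K)
    (hA : LinearIndependent K A.col) : ∃ r : k ↪ m, (A.submatrix r id).det ≠ 0 := by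
  obtain ⟨κ, a, ha, hspan, hli⟩ := exists_linearIndependent' K A.row
  have : Fintype κ := Fintype.ofInjective a ha
  have hcard : Fintype.card κ = Fintype.card k := by
    rw [← finrank_span_eq_card hli, hspan, ← rank_eq_finrank_span_row, ← rank_transpose,
      hA.rank_matrix]
  let e : k ≃ κ := (Fintype.equivOfCardEq hcard).symm
  refine ⟨⟨a ∘ e, ha.comp e.injective⟩, ?_⟩
  rw [← isUnit_iff_ne_zero, ← isUnit_iff_isUnit_det, ← linearIndependent_rows_iff_isUnit]
  exact hli.comp e e.injective

theorem exists_det_submatrix_ne_zero_of_det_ne_zero {R n k : Type*} [CommRing R] [IsDomain R]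
    [Fintype n] [DecidableEq n] [Fintype k] [DecidableEq k] {M : Matrix n n R} (hM : M.det ≠ 0)
    (c : k ↪ n) : ∃ r : k ↪ n, (M.submatrix r c).det ≠ 0 := by
  let ι := algebraMap R (FractionRing R)
  have hι : Function.Injective ι := IsFractionRing.injective R (FractionRing R)
  have hdet : IsUnit (M.map ι).det := by
    rw [isUnit_iff_ne_zero, ← RingHom.mapMatrix_apply, ← RingHom.map_det]
    exact (map_ne_zero_iff ι hι).mpr hM
  have hcols : LinearIndependent (FractionRing R) ((M.map ι).submatrix id c).col :=
    (linearIndependent_cols_iff_isUnit.mpr ((isUnit_iff_isUnit_det _).mpr hdet)).comp c c.injective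
  obtain ⟨r, hr⟩ := exists_det_submatrix_ne_zero_of_linearIndependent_cols _ hcols
  refine ⟨r, fun h => hr ?_⟩
  rw [submatrix_submatrix, Function.id_comp, Function.comp_id, submatrix_map,
    ← RingHom.mapMatrix_apply, ← RingHom.map_det, h, map_zero]

end Matrix

namespace MvPolynomial

theorem pderiv_aeval_of_pderiv_eq_pderiv_X {R σ : Type*} [CommSemiring R] {j : σ}
    {f : σ → MvPolynomial σ R} (hf : ∀ i, pderiv j (f i) = pderiv j (X i))
    (p : MvPolynomial σ R) : pderiv j (aeval f p) = aeval f (pderiv j p) := by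
  classical
  induction p using MvPolynomial.induction_on with
  | C a => simp
  | add p q hp hq => simp only [map_add, hp, hq]
  | mul_X p i hp =>
    simp only [Derivation.leibniz, map_add, map_mul, smul_eq_mul, aeval_X, hp, hf, pderiv_X]
    by_cases hij : i = j <;> simp [hij]

end MvPolynomial

/-- Let `d₁, …, d_m ∈ ℝ[x₁,…,x_m]` and let `I ⊆ {1,…,m}`. If the
polynomial obtained from `det (Jac d)` by substituting `x_i = 0` for all `i ∈ I` is not
the zero polynomial, then there is a choice of `m - |I|` of the substituted polynomials
`d̃_s` (rows) such that the `(m-|I|) × (m-|I|)` Jacobian of these with respect to the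
variables `x_j`, `j ∉ I` (columns), has nonzero determinant. -/
theorem exists_nonsingular_sub_jacobian (m : ℕ) (d : Fin m → MvPolynomial (Fin m) ℝ)
    (I : Finset (Fin m))
    (h : (MvPolynomial.aeval (fun j : Fin m => if j ∈ I then (0 : MvPolynomial (Fin m) ℝ) else MvPolynomial.X j))
        (Matrix.det (Matrix.of fun s j : Fin m => MvPolynomial.pderiv j (d s))) ≠ 0) :
    ∃ (rows : Fin (m - I.card) ↪ Fin m) (cols : Fin (m - I.card) ↪ Fin m),
      (∀ t, cols t ∉ I) ∧
      Matrix.det (Matrix.of fun s t : Fin (m - I.card) =>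
          MvPolynomial.pderiv (cols t)
            ((MvPolynomial.aeval (fun j : Fin m => if j ∈ I then (0 : MvPolynomial (Fin m) ℝ) else MvPolynomial.X j))
              (d (rows s)))) ≠ 0 := by
  set σ := aeval (R := ℝ) fun j : Fin m => if j ∈ I then (0 : MvPolynomial (Fin m) ℝ) else X j
  let cols : Fin (m - I.card) ↪ Fin m :=
    (Iᶜ.orderEmbOfFin (by simp [Finset.card_compl])).toEmbedding
  have hcols : ∀ t, cols t ∉ I := fun t => Finset.mem_compl.mp (Iᶜ.orderEmbOfFin_mem _ t)
  have hσ (t) (i : Fin m) :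
      pderiv (cols t) (if i ∈ I then 0 else X i : MvPolynomial (Fin m) ℝ) =
        pderiv (cols t) (X i) := by
    split_ifs with hi
    · rw [map_zero, pderiv_X_of_ne (ne_of_mem_of_not_mem hi (hcols t))]
    · rfl
  have hJ : (σ.mapMatrix (of fun s j => pderiv j (d s))).det ≠ 0 := by rwa [← AlgHom.map_det]
  obtain ⟨rows, hrows⟩ := exists_det_submatrix_ne_zero_of_det_ne_zero hJ cols
  refine ⟨rows, cols, hcols, ?_⟩
  convert hrows using 2
  ext s t : 1
  exact pderiv_aeval_of_pderiv_eq_pderiv_X (hσ t) _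
end

section
/- Let m ≥ 1 and let x_1, …, x_m be elements of a commutative ring. Let M be the m×m matrix whose (i,j) entry, for 1 ≤ i, j ≤ m, is E_{i−1}(x_1, …, x_{j−1}, x_{j+1}, …, x_m), the elementary symmetric polynomial of degree i−1 in the m−1 quantities obtained by omitting x_j. Then det M = ∏_{1 ≤ i < j ≤ m} (x_i − x_j). -/
/-- The `k`-th elementary symmetric polynomial of the quantities `f x`, `x ∈ s`
(with `E_0 = 1` and `E_k = 0` for `k` larger than the number of quantities). -/
def esymmOf {ι R : Type*} [DecidableEq ι] [CommRing R] (s : Finset ι) (f : ι → R) (k : ℕ) : R :=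
  ∑ t ∈ s.powersetCard k, ∏ x ∈ t, f x

lemma esymmOf_zero {ι R : Type*} [DecidableEq ι] [CommRing R] (s : Finset ι) (f : ι → R) :
    esymmOf s f 0 = 1 := by
  simp [esymmOf]

lemma esymmOf_insert {ι R : Type*} [DecidableEq ι] [CommRing R] {s : Finset ι} {a : ι}
    (h : a ∉ s) (f : ι → R) (k : ℕ) :
    esymmOf (insert a s) f (k + 1) = esymmOf s f (k + 1) + f a * esymmOf s f k := by
  unfold esymmOf
  rw [Finset.powersetCard_succ_insert h, Finset.sum_union, Finset.sum_image, Finset.mul_sum]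
  · congr 1
    refine Finset.sum_congr rfl fun t ht => ?_
    rw [Finset.prod_insert fun hat => h ((Finset.mem_powersetCard.1 ht).1 hat)]
  · intro t ht u hu htu
    have hat : a ∉ t := fun hat => h ((Finset.mem_powersetCard.1 ht).1 hat)
    have hau : a ∉ u := fun hau => h ((Finset.mem_powersetCard.1 hu).1 hau)
    rw [← Finset.erase_insert hat, ← Finset.erase_insert hau, htu]
  · rw [Finset.disjoint_left]
    intro t ht ht'
    obtain ⟨u, hu, rfl⟩ := Finset.mem_image.1 ht'
    exact h ((Finset.mem_powersetCard.1 ht).1 (Finset.mem_insert_self a u))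

lemma esymmOf_erase {ι R : Type*} [DecidableEq ι] [CommRing R] {s : Finset ι} {a : ι}
    (h : a ∈ s) (f : ι → R) (k : ℕ) :
    esymmOf (s.erase a) f k
      = ∑ r ∈ Finset.range (k + 1), (-1 : R) ^ r * f a ^ r * esymmOf s f (k - r) := by
  induction k with
  | zero => simp [esymmOf_zero]
  | succ k ih =>
    have hins : esymmOf s f (k + 1)
        = esymmOf (s.erase a) f (k + 1) + f a * esymmOf (s.erase a) f k := by
      conv_lhs => rw [← Finset.insert_erase h]
      exact esymmOf_insert (Finset.notMem_erase a s) f k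
    have h2 : esymmOf (s.erase a) f (k + 1)
        = esymmOf s f (k + 1) - f a * esymmOf (s.erase a) f k := by
      rw [hins]; ring
    rw [h2, ih,
      Finset.sum_range_succ' (fun r => (-1 : R) ^ r * f a ^ r * esymmOf s f (k + 1 - r)) (k + 1)]
    simp only [pow_zero, one_mul, Nat.succ_sub_succ, Nat.sub_zero]
    have h3 : ∀ r ∈ Finset.range (k + 1),
        (-1 : R) ^ (r + 1) * f a ^ (r + 1) * esymmOf s f (k - r)
          = -(f a * ((-1 : R) ^ r * f a ^ r * esymmOf s f (k - r))) := by
      intro r _; ring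
    rw [Finset.sum_congr rfl h3, Finset.sum_neg_distrib, ← Finset.mul_sum]
    ring

lemma prod_pairs {R : Type*} [CommRing R] (m : ℕ) (f : Fin m → Fin m → R) :
    ∏ p ∈ Finset.univ.filter (fun p : Fin m × Fin m => p.1 < p.2), f p.1 p.2
      = ∏ i : Fin m, ∏ j ∈ Finset.Ioi i, f i j := by
  rw [Finset.prod_sigma']
  refine Finset.prod_nbij' (fun p => ⟨p.1, p.2⟩) (fun p => (p.1, p.2)) ?_ ?_ ?_ ?_ ?_ <;>
    simp [Finset.mem_Ioi]

open Matrix in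
/-- For `m ≥ 1` and `x₁, …, x_m` in a commutative ring, the determinant of
the `m × m` matrix whose `(i, j)` entry is `E_{i-1}(x₁, …, x_{j-1}, x_{j+1}, …, x_m)`
(elementary symmetric polynomial of degree `i-1` omitting `x_j`) equals
`∏_{1 ≤ i < j ≤ m} (x_i - x_j)`. -/
theorem det_esymm_matrix {R : Type*} [CommRing R] (m : ℕ) (hm : 1 ≤ m) (x : Fin m → R) :
    Matrix.det (Matrix.of fun i j : Fin m => esymmOf (Finset.univ.erase j) x i.val)
      = ∏ p ∈ Finset.univ.filter (fun p : Fin m × Fin m => p.1 < p.2), (x p.1 - x p.2) := by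
  classical
  set T : Matrix (Fin m) (Fin m) R :=
    Matrix.of fun i r : Fin m =>
      if r ≤ i then (-1 : R) ^ r.val * esymmOf Finset.univ x (i.val - r.val) else 0 with hT
  have hfact : (Matrix.of fun i j : Fin m => esymmOf (Finset.univ.erase j) x i.val)
      = T * (Matrix.vandermonde x)ᵀ := by
    ext i j
    rw [Matrix.mul_apply]
    set g : ℕ → R := fun r =>
      if r ≤ i.val then (-1 : R) ^ r * esymmOf Finset.univ x (i.val - r) * x j ^ r else 0 with hg
    have hterm : ∀ r : Fin m, T i r * (Matrix.vandermonde x)ᵀ r j = g r.val := by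
      intro r
      simp only [hT, hg, Matrix.of_apply, Matrix.transpose_apply, Matrix.vandermonde_apply,
        Fin.le_def, ite_mul, zero_mul]
    rw [Finset.sum_congr rfl fun r _ => hterm r]
    rw [Fin.sum_univ_eq_sum_range g m]
    have hsub : Finset.range (i.val + 1) ⊆ Finset.range m := by
      apply Finset.range_subset_range.2; omega
    have hzero : ∀ r ∈ Finset.range m, r ∉ Finset.range (i.val + 1) → g r = 0 := by
      intro r _ hr
      simp only [Finset.mem_range, not_lt] at hr
      simp [hg, if_neg (by omega : ¬ r ≤ i.val)]
    rw [← Finset.sum_subset hsub hzero]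
    rw [Matrix.of_apply, esymmOf_erase (Finset.mem_univ j) x i.val]
    refine Finset.sum_congr rfl fun r hr => ?_
    simp only [Finset.mem_range] at hr
    simp only [hg]
    rw [if_pos (by omega : r ≤ i.val)]
    ring
  rw [hfact, Matrix.det_mul, Matrix.det_transpose, Matrix.det_vandermonde]
  have hdetT : T.det = ∏ i : Fin m, (-1 : R) ^ i.val := by
    rw [Matrix.det_of_lowerTriangular T]
    · refine Finset.prod_congr rfl fun i _ => ?_
      simp [hT, esymmOf_zero]
    · intro i r hir
      have : ¬ r ≤ i := not_le.2 hir
      simp [hT, this]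
  rw [hdetT, prod_pairs m fun a b => x a - x b]
  have hrow : ∀ i : Fin m, ∏ j ∈ Finset.Ioi i, (x i - x j)
      = (-1 : R) ^ (Finset.Ioi i).card * ∏ j ∈ Finset.Ioi i, (x j - x i) := by
    intro i
    rw [← Finset.prod_const, ← Finset.prod_mul_distrib]
    exact Finset.prod_congr rfl fun j _ => by ring
  simp_rw [hrow]
  rw [Finset.prod_mul_distrib]
  congr 1
  simp_rw [Fin.card_Ioi, Finset.prod_pow_eq_pow_sum]
  congr 1
  rw [Fin.sum_univ_eq_sum_range (fun i => i) m,
    Fin.sum_univ_eq_sum_range (fun i => m - 1 - i) m, Finset.sum_range_reflect (fun i => i) m]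
end

section
/- Fix n ≥ 2 and regard the 2n−1 parameters a_{01}, a_{21}, …, a_{n1}, a_{12}, …, a_{1n} as indeterminates. Let c = (c_0, …, c_{n−1}, d_0, …, d_{n−2}) be the coefficient map of the n-compartment mammillary model, a tuple of 2n−1 polynomials in these 2n−1 indeterminates. Then the determinant of the (2n−1)×(2n−1) Jacobian matrix of c equals, up to sign, a_{12}a_{13}⋯a_{1n} · ∏_{2 ≤ i < j ≤ n} (a_{1i} − a_{1j})^2. In particular, the locus of non-identifiable parameter values of the mammillary model is defined by the vanishing of a_{12}a_{13}⋯a_{1n} · ∏_{2 ≤ i < j ≤ n} (a_{1i} − a_{1j})^2. -/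
open MvPolynomial

/-- Index `k : Fin (m+2)` (a compartment `k+1 ∈ {2,…,n}`, `k ≥ 1`) recast in `Fin (m+1)`
(as `k - 1 ∈ {0,…,n-2}`). -/
def subOne {m : ℕ} (k : Fin (m + 2)) : Fin (m + 1) :=
  ⟨k.val - 1, by have := k.isLt; omega⟩

/-- The mammillary (star) compartmental matrix with `n = m + 2` compartments:
`A 0 0 = -a₀₁ - (a₂₁ + ⋯ + a_{n1})`, first row `a_{1k}`, first column `a_{k1}`,
diagonal `-a_{1k}`, all other entries `0`.  Here `aK1 k = a_{k+2,1}` and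
`a1K k = a_{1,k+2}` for `k : Fin (m+1)`. -/
def mamMatrix {R : Type*} [CommRing R] (m : ℕ) (a01 : R) (aK1 a1K : Fin (m + 1) → R) :
    Matrix (Fin (m + 2)) (Fin (m + 2)) R :=
  Matrix.of fun i j =>
    if i = 0 then (if j = 0 then -a01 - ∑ k, aK1 k else a1K (subOne j))
    else if j = 0 then aK1 (subOne i)
    else if i = j then -(a1K (subOne i)) else 0

/-- Index type for the `2n - 1` parameters of the mammillary model (`n = m + 2`):
`.inl 0 ↦ a₀₁`, `.inl (k+1) ↦ a_{k+2,1}`, `.inr k ↦ a_{1,k+2}`. -/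
abbrev MamIx (m : ℕ) := Fin (m + 2) ⊕ Fin (m + 1)

/-- The mammillary compartmental matrix with the parameters as indeterminates. -/
noncomputable def mamA (m : ℕ) :
    Matrix (Fin (m + 2)) (Fin (m + 2)) (MvPolynomial (MamIx m) ℝ) :=
  mamMatrix m (X (Sum.inl 0)) (fun k => X (Sum.inl k.succ)) (fun k => X (Sum.inr k))

/-- The coefficient map of the mammillary model: `.inl i ↦ c_i` (coefficient of `λ^i` in
`det (λI - A)`), `.inr i ↦ d_i` (coefficient of `λ^i` in `det (λI - A₁₁)`). -/
noncomputable def mamCoeff (m : ℕ) : MamIx m → MvPolynomial (MamIx m) ℝ :=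
  Sum.elim (fun i => (mamA m).charpoly.coeff i.val)
    (fun i => ((mamA m).submatrix Fin.succ Fin.succ).charpoly.coeff i.val)

/-- The `(2n-1) × (2n-1)` Jacobian matrix of the coefficient map of the mammillary model. -/
noncomputable def mamJac (m : ℕ) : Matrix (MamIx m) (MamIx m) (MvPolynomial (MamIx m) ℝ) :=
  Matrix.of fun s t => MvPolynomial.pderiv t (mamCoeff m s)

/-- The singular-locus polynomial `a₁₂a₁₃⋯a_{1n} · ∏_{2 ≤ i < j ≤ n} (a_{1i} - a_{1j})²`. -/
noncomputable def mamSing (m : ℕ) : MvPolynomial (MamIx m) ℝ :=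
  (∏ k : Fin (m + 1), X (Sum.inr k)) *
    ∏ p ∈ Finset.univ.filter (fun p : Fin (m + 1) × Fin (m + 1) => p.1 < p.2),
      (X (Sum.inr p.1) - X (Sum.inr p.2)) ^ 2

/-!
Since `det (λI - A)` is an arrowhead determinant, the characteristic polynomial is
`(λ + a₀₁) Q + λ ∑ₖ a_{k1} Qₖ`, where `Q = ∏ₖ (λ + a_{1k})` is the characteristic polynomial of
`A₁₁` and `Qₖ = Q / (λ + a_{1k})`. It is affine in `a₀₁` and the `a_{k1}`, and `Q` does not involve
them at all, so the Jacobian is block upper triangular. Its upper diagonal block holds the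
coefficients of `Q, λQ₂, …, λQₙ`, the lower one those of `∂Q/∂a_{1k} = Qₖ`. Expanding the upper
block along its constant-coefficient row gives `Q(0) = a₁₂ ⋯ a_{1n}` times the lower block, and
multiplying the lower block by the Vandermonde matrix `V` of the roots `-a_{1k}` of `Q` makes it
diagonal with entries `Qₖ(-a_{1k})`, whose product is `±(det V)²`. Hence the lower block has
determinant `±det V = ±∏_{i<j} (a_{1i} - a_{1j})`, and the Jacobian has determinant
`a₁₂ ⋯ a_{1n} · (det V)²`.
-/

open Finset Matrix
open scoped Polynomial

namespace Derivation

variable {R A : Type*} [CommRing R] [CommRing A] [Algebra R A] (D : Derivation R A A)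

noncomputable def coeffwise : Derivation R A[X] A[X] :=
  PolynomialModule.equivPolynomialSelf.compDer D.mapCoeffs

@[simp]
lemma coeff_coeffwise (p : A[X]) (i : ℕ) : (D.coeffwise p).coeff i = D (p.coeff i) := rfl

@[simp]
lemma coeffwise_X : D.coeffwise (Polynomial.X : A[X]) = 0 := by
  ext i; simp [Polynomial.coeff_X, apply_ite D]

@[simp]
lemma coeffwise_C (a : A) : D.coeffwise (Polynomial.C a) = Polynomial.C (D a) := by
  ext i; simp [Polynomial.coeff_C, apply_ite D]

lemma coeffwise_nodal {ι : Type*} [DecidableEq ι] (s : Finset ι) (v : ι → A) :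
    D.coeffwise (Lagrange.nodal s v)
      = -∑ k ∈ s, Polynomial.C (D (v k)) * Lagrange.nodal (s.erase k) v := by
  induction s using Finset.induction_on with
  | empty => simp
  | insert a s ha ih =>
    have herase : ∀ k ∈ s, Lagrange.nodal ((insert a s).erase k) v
        = (Polynomial.X - Polynomial.C (v a)) * Lagrange.nodal (s.erase k) v := fun k hk => by
      rw [erase_insert_of_ne (ne_of_mem_of_not_mem hk ha).symm,
        Lagrange.nodal_insert_eq_nodal fun h => ha (mem_of_mem_erase h)]
    rw [sum_insert ha, erase_insert ha, sum_congr rfl fun k hk => by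
      rw [herase k hk, mul_left_comm], ← mul_sum, Lagrange.nodal_insert_eq_nodal ha, leibniz, ih]
    simp only [smul_eq_mul, map_sub, coeffwise_X, coeffwise_C]
    ring

end Derivation

section CoeffMatrix

variable {R : Type*} [CommRing R]

def Polynomial.coeffMatrix (n : ℕ) {ι : Type*} (p : ι → R[X]) : Matrix (Fin n) ι R :=
  of fun i k => (p k).coeff i

lemma vandermonde_mul_coeffMatrix {n : ℕ} {ι : Type*} (x : Fin n → R) (p : ι → R[X])
    (hp : ∀ k, (p k).natDegree < n) :
    vandermonde x * Polynomial.coeffMatrix n p = of fun l k => (p k).eval (x l) := by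
  refine Matrix.ext fun l k => ?_
  rw [mul_apply, of_apply, Polynomial.eval_eq_sum_range' (hp k), ← Fin.sum_univ_eq_sum_range]
  exact sum_congr rfl fun j _ => mul_comm _ _

lemma det_coeffMatrix_cons_X_mul {n : ℕ} (p : R[X]) (q : Fin n → R[X]) :
    (Polynomial.coeffMatrix (n + 1) (Fin.cons p fun k => Polynomial.X * q k)).det
      = p.coeff 0 * (Polynomial.coeffMatrix n q).det := by
  have hminor : (Polynomial.coeffMatrix (n + 1) (Fin.cons p fun k => Polynomial.X * q k)).submatrix
      Fin.succ Fin.succ = Polynomial.coeffMatrix n q :=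
    Matrix.ext fun i k => by simp [Polynomial.coeffMatrix, Polynomial.coeff_X_mul]
  rw [det_succ_row_zero, Fin.sum_univ_succ, sum_eq_zero fun k _ => by
    simp [Polynomial.coeffMatrix], Fin.succAbove_zero, hminor]
  simp [Polynomial.coeffMatrix]

lemma det_vandermonde_mul_det_coeffMatrix_nodal {n : ℕ} (x : Fin n → R) :
    (vandermonde x).det
        * (Polynomial.coeffMatrix n fun k => Lagrange.nodal (univ.erase k) x).det
      = ∏ i, ∏ j ∈ Ioi i, -(x j - x i) ^ 2 := by
  nontriviality R
  have hdiag : vandermonde x * Polynomial.coeffMatrix n (fun k => Lagrange.nodal (univ.erase k) x)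
      = diagonal fun k => ∏ j ∈ univ.erase k, (x k - x j) := by
    rw [vandermonde_mul_coeffMatrix]
    · refine Matrix.ext fun l k => ?_
      rcases eq_or_ne l k with rfl | h
      · simp [Lagrange.eval_nodal]
      · rw [of_apply, diagonal_apply_ne _ h,
          Lagrange.eval_nodal_at_node (mem_erase.2 ⟨h, mem_univ l⟩)]
    · intro k
      rw [Lagrange.natDegree_nodal, card_erase_of_mem (mem_univ k), card_univ, Fintype.card_fin]
      exact Nat.sub_lt k.pos one_pos
  simp_rw [← det_mul, hdiag, det_diagonal, ← compl_singleton,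
    ← prod_prod_Ioi_mul_eq_prod_prod_off_diag (fun j i => x i - x j)]
  exact prod_congr rfl fun i _ => prod_congr rfl fun j _ => by ring

lemma sq_det_coeffMatrix_nodal [IsDomain R] {n : ℕ} {x : Fin n → R} (hx : Function.Injective x) :
    (Polynomial.coeffMatrix n fun k => Lagrange.nodal (univ.erase k) x).det ^ 2
      = (vandermonde x).det ^ 2 := by
  have hV : (vandermonde x).det ^ 2 ≠ 0 := pow_ne_zero 2 (det_vandermonde_ne_zero_iff.2 hx)
  refine mul_left_cancel₀ hV ?_
  rw [← mul_pow, det_vandermonde_mul_det_coeffMatrix_nodal, det_vandermonde]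
  simp only [← prod_pow, ← prod_mul_distrib]
  exact prod_congr rfl fun i _ => prod_congr rfl fun j _ => by ring

end CoeffMatrix

section Arrowhead

variable {R : Type*} [CommRing R]

def arrowhead {n : ℕ} (α : R) (u t d : Fin (n + 1) → R) : Matrix (Fin (n + 2)) (Fin (n + 2)) R :=
  of (vecCons (vecCons α u) fun i => vecCons (t i) (Pi.single i (d i)))

lemma prod_univ_erase_eq_prod_succAbove {M : Type*} [CommMonoid M] {n : ℕ} (k : Fin (n + 1))
    (f : Fin (n + 1) → M) : ∏ j ∈ univ.erase k, f j = ∏ l, f (k.succAbove l) := by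
  rw [← compl_singleton, ← Fin.image_succAbove_univ,
    prod_image fun _ _ _ _ h => Fin.succAbove_right_injective h]

lemma det_vecCons_single_succAbove {n : ℕ} (u d : Fin (n + 1) → R) (k : Fin (n + 1)) :
    (of (vecCons u fun l => Pi.single (k.succAbove l) (d (k.succAbove l)))).det
      = (-1) ^ (k : ℕ) * u k * ∏ j ∈ univ.erase k, d j := by
  rw [det_succ_row_zero, Fintype.sum_eq_single k]
  · have hdiag : (of (vecCons u fun l => Pi.single (k.succAbove l) (d (k.succAbove l)))).submatrix
        Fin.succ k.succAbove = diagonal (d ∘ k.succAbove) := by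
      ext l c
      simp [diagonal_apply, Pi.single_apply, eq_comm]
    rw [hdiag, det_diagonal, prod_univ_erase_eq_prod_succAbove]
    simp
  · intro j hj
    obtain ⟨l, rfl⟩ := Fin.exists_succAbove_eq hj
    rw [det_eq_zero_of_row_eq_zero l fun c => by simp [Pi.single_apply, Fin.succAbove_ne],
      mul_zero]

lemma det_arrowhead {n : ℕ} (α : R) (u t d : Fin (n + 1) → R) :
    (arrowhead α u t d).det = α * ∏ k, d k - ∑ k, u k * t k * ∏ j ∈ univ.erase k, d j := by
  have hdiag : (arrowhead α u t d).submatrix (Fin.succAbove 0) Fin.succ = diagonal d := by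
    ext i j
    simp [arrowhead, diagonal_apply, Pi.single_apply, eq_comm]
  have hminor : ∀ k : Fin (n + 1), (arrowhead α u t d).submatrix k.succ.succAbove Fin.succ
      = of (vecCons u fun l => Pi.single (k.succAbove l) (d (k.succAbove l))) := by
    intro k
    ext i j
    refine Fin.cases ?_ (fun l => ?_) i <;> simp [arrowhead, Fin.succ_succAbove_succ]
  rw [det_succ_column_zero, Fin.sum_univ_succ, hdiag, det_diagonal, sub_eq_add_neg,
    ← sum_neg_distrib]
  congr 1
  · simp [arrowhead]
  refine sum_congr rfl fun k _ => ?_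
  rw [hminor, det_vecCons_single_succAbove]
  simp only [arrowhead, of_apply, cons_val_zero, cons_val_succ, Fin.val_succ, pow_succ]
  have hsign : ((-1 : R) ^ (k : ℕ)) * (-1) ^ (k : ℕ) = 1 := by
    rw [← mul_pow, neg_one_mul, neg_neg, one_pow]
  linear_combination (-(u k * t k * ∏ j ∈ univ.erase k, d j)) * hsign

end Arrowhead

section Mammillary

variable {R : Type*} [CommRing R]

lemma subOne_succ {m : ℕ} (k : Fin (m + 1)) : subOne k.succ = k := by
  ext; simp [subOne]

lemma charmatrix_mamMatrix (m : ℕ) (a01 : R) (aK1 a1K : Fin (m + 1) → R) :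
    (mamMatrix m a01 aK1 a1K).charmatrix =
      arrowhead (Polynomial.X + Polynomial.C a01 + Polynomial.C (∑ k, aK1 k))
        (fun k => -Polynomial.C (a1K k)) (fun k => -Polynomial.C (aK1 k))
        (fun k => Polynomial.X - Polynomial.C (-a1K k)) := by
  refine Matrix.ext fun i j => ?_
  cases i using Fin.cases with
  | zero =>
    cases j using Fin.cases
    · simp [mamMatrix, arrowhead]
      ring
    · simp [mamMatrix, arrowhead, subOne_succ,
        charmatrix_apply_ne _ _ _ (Fin.succ_ne_zero _).symm]
  | succ k =>
    cases j using Fin.cases with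
    | zero => simp [mamMatrix, arrowhead, subOne_succ]
    | succ l =>
      rcases eq_or_ne k l with rfl | h
      · simp [mamMatrix, arrowhead, subOne_succ]
      · simp [mamMatrix, arrowhead, h]

lemma charpoly_mamMatrix (m : ℕ) (a01 : R) (aK1 a1K : Fin (m + 1) → R) :
    (mamMatrix m a01 aK1 a1K).charpoly
      = (Polynomial.X + Polynomial.C a01) * Lagrange.nodal univ (fun k => -a1K k)
        + ∑ k, Polynomial.C (aK1 k) * Polynomial.X
          * Lagrange.nodal (univ.erase k) (fun k => -a1K k) := by
  rw [charpoly, charmatrix_mamMatrix, det_arrowhead, ← Lagrange.nodal_eq, add_mul, map_sum,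
    sum_mul, add_sub_assoc, ← sum_sub_distrib]
  congr 1
  refine sum_congr rfl fun k hk => ?_
  rw [Lagrange.nodal_eq_mul_nodal_erase hk, ← Lagrange.nodal_eq (univ.erase k)]
  simp only [map_neg]
  ring

lemma charpoly_submatrix_mamMatrix (m : ℕ) (a01 : R) (aK1 a1K : Fin (m + 1) → R) :
    ((mamMatrix m a01 aK1 a1K).submatrix Fin.succ Fin.succ).charpoly
      = Lagrange.nodal univ (fun k => -a1K k) := by
  have hdiag :
      (mamMatrix m a01 aK1 a1K).submatrix Fin.succ Fin.succ = diagonal fun k => -a1K k := by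
    ext i j
    simp [mamMatrix, diagonal_apply, subOne_succ]
  rw [hdiag, charpoly_diagonal, Lagrange.nodal_eq]

end Mammillary

noncomputable def mamRoots (m : ℕ) : Fin (m + 1) → MvPolynomial (MamIx m) ℝ :=
  fun k => -X (Sum.inr k)

section MammillaryJacobian

variable {m : ℕ}

lemma mamRoots_injective : Function.Injective (mamRoots m) :=
  neg_injective.comp ((X_injective (R := ℝ)).comp Sum.inr_injective)

lemma coeffwise_pderiv_inl_nodal (w : Fin (m + 2)) (s : Finset (Fin (m + 1))) :
    (pderiv (Sum.inl w)).coeffwise (Lagrange.nodal s (mamRoots m)) = 0 := by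
  simp [Derivation.coeffwise_nodal, mamRoots, pderiv_X]

lemma coeffwise_pderiv_inr_nodal (k : Fin (m + 1)) :
    (pderiv (Sum.inr k)).coeffwise (Lagrange.nodal univ (mamRoots m))
      = Lagrange.nodal (univ.erase k) (mamRoots m) := by
  simp [Derivation.coeffwise_nodal, mamRoots, pderiv_X, Pi.single_apply]

lemma charpoly_mamA :
    (mamA m).charpoly
      = (Polynomial.X + Polynomial.C (X (Sum.inl 0))) * Lagrange.nodal univ (mamRoots m)
        + ∑ k, Polynomial.C (X (Sum.inl k.succ)) * Polynomial.X
          * Lagrange.nodal (univ.erase k) (mamRoots m) :=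
  charpoly_mamMatrix _ _ _ _

lemma charpoly_submatrix_mamA :
    ((mamA m).submatrix Fin.succ Fin.succ).charpoly = Lagrange.nodal univ (mamRoots m) :=
  charpoly_submatrix_mamMatrix _ _ _ _

lemma toBlocks₁₁_mamJac :
    (mamJac m).toBlocks₁₁ = Polynomial.coeffMatrix (m + 2) (Fin.cons
      (Lagrange.nodal univ (mamRoots m))
      fun k => Polynomial.X * Lagrange.nodal (univ.erase k) (mamRoots m)) := by
  refine Matrix.ext fun i w => ?_
  show ((pderiv (Sum.inl w)).coeffwise (mamA m).charpoly).coeff i = _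
  rw [charpoly_mamA]
  cases w using Fin.cases <;>
    simp [Polynomial.coeffMatrix, coeffwise_pderiv_inl_nodal, pderiv_X, Pi.single_apply,
      mul_comm Polynomial.X]

lemma toBlocks₂₁_mamJac : (mamJac m).toBlocks₂₁ = 0 := by
  refine Matrix.ext fun i w => ?_
  show ((pderiv (Sum.inl w)).coeffwise ((mamA m).submatrix Fin.succ Fin.succ).charpoly).coeff i = _
  rw [charpoly_submatrix_mamA, coeffwise_pderiv_inl_nodal]
  rfl

lemma toBlocks₂₂_mamJac : (mamJac m).toBlocks₂₂
    = Polynomial.coeffMatrix (m + 1) fun k => Lagrange.nodal (univ.erase k) (mamRoots m) := by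
  refine Matrix.ext fun i k => ?_
  show ((pderiv (Sum.inr k)).coeffwise ((mamA m).submatrix Fin.succ Fin.succ).charpoly).coeff i = _
  rw [charpoly_submatrix_mamA, coeffwise_pderiv_inr_nodal]
  rfl

end MammillaryJacobian

lemma prod_filter_fst_lt_snd {M : Type*} [CommMonoid M] {n : ℕ} (f : Fin n × Fin n → M) :
    ∏ p ∈ univ.filter (fun p : Fin n × Fin n => p.1 < p.2), f p = ∏ i, ∏ j ∈ Ioi i, f (i, j) := by
  rw [prod_filter, Fintype.prod_prod_type]
  exact prod_congr rfl fun i _ => by rw [← filter_lt_eq_Ioi, prod_filter]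

/-- For the `n`-compartment mammillary model (`n = m + 2 ≥ 2`), the
determinant of the Jacobian of the coefficient map equals, up to sign,
`a₁₂a₁₃⋯a_{1n} · ∏_{2 ≤ i < j ≤ n} (a_{1i} - a_{1j})²`; this is the equation of the
locus of non-identifiable parameter values. -/
theorem mamJac_det (m : ℕ) :
    (mamJac m).det = mamSing m ∨ (mamJac m).det = -mamSing m := by
  left
  rw [← fromBlocks_toBlocks (mamJac m), toBlocks₂₁_mamJac, det_fromBlocks_zero₂₁,
    toBlocks₁₁_mamJac, toBlocks₂₂_mamJac, det_coeffMatrix_cons_X_mul, mul_assoc, ← sq,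
    sq_det_coeffMatrix_nodal mamRoots_injective, det_vandermonde, mamSing, prod_filter_fst_lt_snd]
  congr 1
  · simp [Polynomial.coeff_zero_eq_eval_zero, Lagrange.eval_nodal, mamRoots]
  · simp only [← prod_pow]
    exact prod_congr rfl fun i _ => prod_congr rfl fun j _ => by simp only [mamRoots]; ring
end

section
/- Fix n ≥ 3 and let φ : ℝ^{n+1} → ℝ^{2n−1} be the coefficient map of the n-compartment cycle model, sending the parameter vector (a_{01}, a_{21}, a_{32}, …, a_{n,n−1}, a_{1n}) to (c_0, …, c_{n−1}, d_0, …, d_{n−2}). Then for every point p ∈ ℝ^{n+1}, the Jacobian matrix of φ evaluated at p has rank n+1 if and only if the value at p of a_{32}a_{43}⋯a_{n,n−1}a_{1n} · ∏_{2 ≤ i < j ≤ n} (a_{i+1,i} − a_{j+1,j}) is nonzero, where a_{n+1,n} denotes a_{1n}. In particular, the cycle model is generically locally identifiable and its singular locus is the vanishing set of this polynomial. -/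
open MvPolynomial

/-- Index `i : Fin (m+3)` recast in `Fin (m+2)` as `i - 1`. -/
def subOne' {m : ℕ} (i : Fin (m + 3)) : Fin (m + 2) :=
  ⟨i.val - 1, by have := i.isLt; omega⟩

/-- The cycle compartmental matrix with `n = m + 3` compartments. -/
def cycMatrix {R : Type*} [CommRing R] (m : ℕ) (a01 a21 : R) (b : Fin (m + 2) → R) :
    Matrix (Fin (m + 3)) (Fin (m + 3)) R :=
  Matrix.of fun i j =>
    if i = 0 ∧ j = 0 then -a01 - a21
    else if i = 0 ∧ j.val = m + 2 then b (Fin.last (m + 1))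
    else if i.val = j.val + 1 then (if j = 0 then a21 else b (subOne' j))
    else if i = j then -(b (subOne' i))
    else 0

/-- Index type for the `n + 1` parameters of the cycle model (`n = m + 3`):
`.inl 0 ↦ a₀₁`, `.inl 1 ↦ a₂₁`, `.inr k ↦ a_{k+3,k+2}` (with `.inr (m+1) ↦ a_{1n}`). -/
abbrev CycIx (m : ℕ) := Fin 2 ⊕ Fin (m + 2)

/-- The cycle compartmental matrix with the parameters as indeterminates. -/
noncomputable def cycA (m : ℕ) :
    Matrix (Fin (m + 3)) (Fin (m + 3)) (MvPolynomial (CycIx m) ℝ) :=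
  cycMatrix m (X (Sum.inl 0)) (X (Sum.inl 1)) (fun k => X (Sum.inr k))

/-- All `2n - 1` coefficients of the cycle model: `.inl i ↦ c_i`, `.inr i ↦ d_i`,
where `c_i` is the coefficient of `λ^i` in `det (λI - A)` and `d_i` that in
`det (λI - A₁₁)`. -/
noncomputable def cycCoeff (m : ℕ) : Fin (m + 3) ⊕ Fin (m + 2) → MvPolynomial (CycIx m) ℝ :=
  Sum.elim (fun i => (cycA m).charpoly.coeff i.val)
    (fun i => ((cycA m).submatrix Fin.succ Fin.succ).charpoly.coeff i.val)

/-- The coefficient map `φ : ℝ^{n+1} → ℝ^{2n-1}` of the cycle model. -/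
noncomputable def cycPhi (m : ℕ) (p : CycIx m → ℝ) : Fin (m + 3) ⊕ Fin (m + 2) → ℝ :=
  fun s => MvPolynomial.eval p (cycCoeff m s)

/-- The `(2n-1) × (n+1)` Jacobian matrix of `φ` evaluated at the point `p`. -/
noncomputable def cycJacAt (m : ℕ) (p : CycIx m → ℝ) :
    Matrix (Fin (m + 3) ⊕ Fin (m + 2)) (CycIx m) ℝ :=
  Matrix.of fun s t => MvPolynomial.eval p (MvPolynomial.pderiv t (cycCoeff m s))

/-!
Write `b = (a₃₂, …, a_{n,n-1}, a_{1n})`. The submatrix `A₁₁` is lower bidiagonal with diagonal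
`-b`, so `det (λI - A₁₁) = f := ∏ₖ (λ + bₖ)`, and expanding along the first row gives
`det (λI - A) = (λ + a₀₁ + a₂₁) f - a₂₁ ∏ₖ bₖ`. Differentiating coefficientwise, the Jacobian
columns at `p` are the coefficient vectors of the pairs `(f, 0)` and `(f - ∏ₖ bₖ, 0)` for `a₀₁`
and `a₂₁`, and `((λ + a₀₁ + a₂₁) gₖ - a₂₁ gₖ(0), gₖ)` for `bₖ`, where `gₖ = ∏_{j ≠ k} (λ + bⱼ)`.
If `∏ bₖ = 0` the first two columns agree, and if `bₖ = bₗ` so do those of `bₖ` and `bₗ`.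
Conversely, for distinct `bₖ` the `gₖ` are linearly independent (evaluate at `-bₗ`), which kills
the `b`-part of a kernel vector; the constant and leading coefficients of the `c`-rows then kill
the rest.
-/

namespace Matrix

theorem charmatrix_submatrix {n l R : Type*} [DecidableEq n] [DecidableEq l] [Fintype n]
    [Fintype l] [CommRing R] (M : Matrix n n R) {f : l → n} (hf : Function.Injective f) :
    M.charmatrix.submatrix f f = (M.submatrix f f).charmatrix := by
  ext i j
  obtain rfl | h := eq_or_ne i j
  · simp
  · rw [submatrix_apply, charmatrix_apply_ne _ _ _ (hf.ne h), charmatrix_apply_ne _ _ _ h,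
      submatrix_apply]

theorem rank_eq_card_iff_linearIndependent_col {m n K : Type*} [Fintype m] [Fintype n]
    [Field K] (A : Matrix m n K) : A.rank = Fintype.card n ↔ LinearIndependent K A.col := by
  rw [linearIndependent_iff_card_eq_finrank_span, A.rank_eq_finrank_span_cols, eq_comm]
  rfl

end Matrix

theorem Finset.prod_erase_eq_of_apply_eq {ι M : Type*} [DecidableEq ι] [CommMonoid M]
    {s : Finset ι} {f : ι → M} {k l : ι} (hk : k ∈ s) (hl : l ∈ s) (h : f k = f l) :
    ∏ j ∈ s.erase k, f j = ∏ j ∈ s.erase l, f j := by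
  obtain rfl | hne := eq_or_ne k l
  · rfl
  rw [← Finset.mul_prod_erase (s.erase k) f (Finset.mem_erase.mpr ⟨hne.symm, hl⟩),
    ← Finset.mul_prod_erase (s.erase l) f (Finset.mem_erase.mpr ⟨hne, hk⟩),
    Finset.erase_right_comm, h]

theorem prod_sub_ne_zero_iff_injective {ι R : Type*} [Fintype ι] [LinearOrder ι] [CommRing R]
    [NoZeroDivisors R] [Nontrivial R] (f : ι → R) :
    ∏ q ∈ Finset.univ.filter (fun q : ι × ι => q.1 < q.2), (f q.1 - f q.2) ≠ 0 ↔
      Function.Injective f := by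
  simp only [Finset.prod_ne_zero_iff, Finset.mem_filter, Finset.mem_univ, true_and,
    sub_ne_zero, Prod.forall]
  refine ⟨fun h k l hkl => ?_, fun hf k l hkl => hf.ne hkl.ne⟩
  by_contra hne
  rcases lt_or_gt_of_ne hne with hlt | hlt
  exacts [h k l hlt hkl, h l k hlt hkl.symm]

theorem linearIndependent_prod_erase_X_add_C {K ι : Type*} [Field K] [Fintype ι] [DecidableEq ι]
    {b : ι → K} (hb : Function.Injective b) :
    LinearIndependent K fun k => ∏ j ∈ Finset.univ.erase k,
      (Polynomial.X + Polynomial.C (b j)) := by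
  rw [Fintype.linearIndependent_iff]
  intro v hv l
  have hl := congrArg (Polynomial.eval (-b l)) hv
  rw [Polynomial.eval_finsetSum, Finset.sum_eq_single l, Polynomial.eval_smul,
    Polynomial.eval_zero, smul_eq_zero] at hl
  · refine hl.resolve_right ?_
    simp only [Polynomial.eval_prod, Polynomial.eval_add, Polynomial.eval_X, Polynomial.eval_C,
      Finset.prod_ne_zero_iff, Finset.mem_erase, ne_eq, neg_add_eq_zero]
    exact fun j hj => hb.ne (Ne.symm hj.1)
  · intro k _ hkl
    rw [Polynomial.eval_smul, Polynomial.eval_prod,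
      Finset.prod_eq_zero (Finset.mem_erase.mpr ⟨hkl.symm, Finset.mem_univ l⟩) (by simp),
      smul_zero]
  · simp

namespace Derivation

variable {R A M : Type*} [CommRing R] [CommRing A] [Algebra R A] [AddCommGroup M] [Module A M]
  [Module R M]

theorem leibniz_prod {ι : Type*} [DecidableEq ι] (D : Derivation R A M) (s : Finset ι)
    (f : ι → A) : D (∏ i ∈ s, f i) = ∑ i ∈ s, (∏ j ∈ s.erase i, f j) • D (f i) := by
  induction s using Finset.induction_on with
  | empty => simp
  | insert a s ha ih =>
    rw [Finset.prod_insert ha, leibniz, ih, Finset.sum_insert ha, Finset.erase_insert ha,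
      Finset.smul_sum, add_comm]
    congr 1
    refine Finset.sum_congr rfl fun i hi => ?_
    rw [Finset.erase_insert_of_ne (ne_of_mem_of_not_mem hi ha).symm,
      Finset.prod_insert fun h => ha (Finset.mem_of_mem_erase h), mul_smul]

variable (D : Derivation R A A)

noncomputable def mapCoeffsSelf : Derivation R (Polynomial A) (Polynomial A) :=
  PolynomialModule.equivPolynomialSelf.compDer D.mapCoeffs

@[simp] lemma coeff_mapCoeffsSelf (P : Polynomial A) (i : ℕ) :
    (D.mapCoeffsSelf P).coeff i = D (P.coeff i) := rfl

@[simp] lemma mapCoeffsSelf_C (a : A) :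
    D.mapCoeffsSelf (Polynomial.C a) = Polynomial.C (D a) := by
  ext i; simp [Polynomial.coeff_C, apply_ite D]

@[simp] lemma mapCoeffsSelf_X : D.mapCoeffsSelf Polynomial.X = 0 := by
  ext i; simp [Polynomial.coeff_X, apply_ite D]

end Derivation

lemma eval_pderiv_coeff {R σ : Type*} [CommRing R] (q : σ → R) (t : σ)
    (P : Polynomial (MvPolynomial σ R)) (i : ℕ) :
    eval q (pderiv t (P.coeff i)) = (((pderiv t).mapCoeffsSelf P).map (eval q)).coeff i := by
  rw [Polynomial.coeff_map, Derivation.coeff_mapCoeffsSelf]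

section CycMatrix

variable {R : Type*} [CommRing R] (m : ℕ) (a01 a21 : R) (b : Fin (m + 2) → R)

@[simp] lemma subOne'_succ (j : Fin (m + 2)) : subOne' j.succ = j := by
  ext; simp [subOne']

lemma cycMatrix_zero_zero : cycMatrix m a01 a21 b 0 0 = -a01 - a21 := by
  simp [cycMatrix]

lemma cycMatrix_zero_last : cycMatrix m a01 a21 b 0 (Fin.last _) = b (Fin.last _) := by
  simp [cycMatrix]

lemma cycMatrix_zero_of_ne {j : Fin (m + 3)} (h0 : j ≠ 0) (hlast : j ≠ Fin.last _) :
    cycMatrix m a01 a21 b 0 j = 0 := by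
  simp only [cycMatrix, Matrix.of_apply]
  rw [Ne, Fin.ext_iff, Fin.val_last] at hlast
  split_ifs <;> simp_all

lemma cycMatrix_succ_succ_self (i : Fin (m + 2)) :
    cycMatrix m a01 a21 b i.succ i.succ = -b i := by
  simp [cycMatrix]

lemma cycMatrix_succ_succ_of_lt {i j : Fin (m + 2)} (h : i < j) :
    cycMatrix m a01 a21 b i.succ j.succ = 0 := by
  rw [Fin.lt_def] at h
  simp only [cycMatrix, Matrix.of_apply, Fin.succ_ne_zero, false_and, if_false]
  rw [if_neg (by simp; omega), if_neg (by simp [Fin.ext_iff]; omega)]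

lemma cycMatrix_succ_castSucc_self (i : Fin (m + 2)) :
    cycMatrix m a01 a21 b i.succ i.castSucc =
      (Fin.cons a21 (fun k => b k.castSucc) : Fin (m + 2) → R) i := by
  simp only [cycMatrix, Matrix.of_apply, Fin.succ_ne_zero, false_and, if_false]
  rw [if_pos (by simp)]
  cases i using Fin.cases with
  | zero => simp
  | succ k => simp [subOne']; rfl

lemma cycMatrix_succ_castSucc_of_lt {i j : Fin (m + 2)} (h : j < i) :
    cycMatrix m a01 a21 b i.succ j.castSucc = 0 := by
  rw [Fin.lt_def] at h
  simp only [cycMatrix, Matrix.of_apply, Fin.succ_ne_zero, false_and, if_false]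
  rw [if_neg (by simp; omega), if_neg (by simp [Fin.ext_iff]; omega)]

theorem cycMatrix_submatrix_succ_charpoly :
    ((cycMatrix m a01 a21 b).submatrix Fin.succ Fin.succ).charpoly =
      ∏ k, (Polynomial.X + Polynomial.C (b k)) := by
  rw [Matrix.charpoly, Matrix.det_of_isLowerTriangular]
  · refine Finset.prod_congr rfl fun k _ => ?_
    rw [Matrix.charmatrix_apply_eq, Matrix.submatrix_apply, cycMatrix_succ_succ_self,
      map_neg, sub_neg_eq_add]
  · intro i j (hij : i < j)
    rw [Matrix.charmatrix_apply_ne _ _ _ hij.ne, Matrix.submatrix_apply,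
      cycMatrix_succ_succ_of_lt _ _ _ _ hij, map_zero, neg_zero]

theorem cycMatrix_charmatrix_submatrix_succ_castSucc_det :
    ((cycMatrix m a01 a21 b).charmatrix.submatrix Fin.succ Fin.castSucc).det =
      ∏ i, -Polynomial.C ((Fin.cons a21 (fun k => b k.castSucc) : Fin (m + 2) → R) i) := by
  rw [Matrix.det_of_isUpperTriangular]
  · refine Finset.prod_congr rfl fun i _ => ?_
    rw [Matrix.submatrix_apply,
      Matrix.charmatrix_apply_ne _ _ _ (Fin.castSucc_lt_succ (i := i)).ne',
      cycMatrix_succ_castSucc_self]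
  · intro i j (hij : j < i)
    rw [Matrix.submatrix_apply,
      Matrix.charmatrix_apply_ne _ _ _ (Fin.castSucc_lt_succ_iff.mpr hij.le).ne',
      cycMatrix_succ_castSucc_of_lt _ _ _ _ hij, map_zero, neg_zero]

theorem cycMatrix_charpoly :
    (cycMatrix m a01 a21 b).charpoly =
      (Polynomial.X + Polynomial.C (a01 + a21)) * ∏ k, (Polynomial.X + Polynomial.C (b k)) -
        Polynomial.C (a21 * ∏ k, b k) := by
  have h0last : (0 : Fin (m + 3)) ≠ Fin.last _ := Fin.last_pos.ne
  rw [Matrix.charpoly, Matrix.det_succ_row_zero, Fintype.sum_eq_add 0 (Fin.last _) h0last]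
  · rw [Fin.succAbove_zero, Fin.succAbove_last, cycMatrix_charmatrix_submatrix_succ_castSucc_det,
      Matrix.charmatrix_submatrix _ (Fin.succ_injective _), ← Matrix.charpoly,
      cycMatrix_submatrix_succ_charpoly, Matrix.charmatrix_apply_eq,
      Matrix.charmatrix_apply_ne _ _ _ h0last, cycMatrix_zero_zero, cycMatrix_zero_last,
      Finset.prod_neg, ← map_prod, Fin.prod_cons, Fin.prod_univ_castSucc b, Finset.card_univ,
      Fintype.card_fin, Fin.val_last, Fin.val_zero, pow_zero, one_mul]
    have hsign : (-1 : Polynomial R) ^ (m + 2) * (-1) ^ (m + 2) = 1 := by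
      rw [← mul_pow, neg_one_mul, neg_neg, one_pow]
    simp only [map_mul, map_neg, map_sub, map_add]
    linear_combination -(Polynomial.C (b (Fin.last _)) * Polynomial.C a21 *
      Polynomial.C (∏ k : Fin (m + 1), b k.castSucc)) * hsign
  · rintro j ⟨hj0, hjlast⟩
    rw [Matrix.charmatrix_apply_ne _ _ _ hj0.symm, cycMatrix_zero_of_ne _ _ _ _ hj0 hjlast,
      map_zero, neg_zero, mul_zero, zero_mul]

end CycMatrix

section Jacobian

variable (m : ℕ) (p : CycIx m → ℝ)

noncomputable def cycProd : Polynomial ℝ :=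
  ∏ k, (Polynomial.X + Polynomial.C (p (.inr k)))

noncomputable def cycProdErase (k : Fin (m + 2)) : Polynomial ℝ :=
  ∏ j ∈ Finset.univ.erase k, (Polynomial.X + Polynomial.C (p (.inr j)))

lemma cycA_charpoly : (cycA m).charpoly =
    (Polynomial.X + Polynomial.C (X (.inl 0) + X (.inl 1))) *
        ∏ k, (Polynomial.X + Polynomial.C (X (.inr k))) -
      Polynomial.C (X (.inl 1) * ∏ k, X (.inr k)) :=
  cycMatrix_charpoly ..

lemma cycA_submatrix_succ_charpoly : ((cycA m).submatrix Fin.succ Fin.succ).charpoly =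
    ∏ k, (Polynomial.X + Polynomial.C (X (.inr k))) :=
  cycMatrix_submatrix_succ_charpoly ..

lemma cycJacAt_inr (i : Fin (m + 2)) (t : CycIx m) :
    cycJacAt m p (.inr i) t = (((pderiv t).mapCoeffsSelf
      (∏ k, (Polynomial.X + Polynomial.C (X (.inr k))))).map (eval p)).coeff i := by
  rw [cycJacAt, Matrix.of_apply, cycCoeff, Sum.elim_inr, eval_pderiv_coeff,
    cycA_submatrix_succ_charpoly]

lemma cycJacAt_inl (i : Fin (m + 3)) (t : CycIx m) :
    cycJacAt m p (.inl i) t = (((pderiv t).mapCoeffsSelf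
      ((Polynomial.X + Polynomial.C (X (.inl 0) + X (.inl 1))) *
        ∏ k, (Polynomial.X + Polynomial.C (X (.inr k))) -
      Polynomial.C (X (.inl 1) * ∏ k, X (.inr k)))).map (eval p)).coeff i := by
  rw [cycJacAt, Matrix.of_apply, cycCoeff, Sum.elim_inl, eval_pderiv_coeff, cycA_charpoly]

lemma cycJacAt_inr_inl (i : Fin (m + 2)) (s : Fin 2) : cycJacAt m p (.inr i) (.inl s) = 0 := by
  simp [cycJacAt_inr, Derivation.leibniz_prod]

lemma cycJacAt_inr_inr (i k : Fin (m + 2)) :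
    cycJacAt m p (.inr i) (.inr k) = (cycProdErase m p k).coeff i := by
  simp [cycJacAt_inr, Derivation.leibniz_prod, Pi.single_apply, Polynomial.map_prod,
    cycProdErase]

lemma cycJacAt_inl_inl_zero (i : Fin (m + 3)) :
    cycJacAt m p (.inl i) (.inl 0) = (cycProd m p).coeff i := by
  simp [cycJacAt_inl, Derivation.leibniz_prod, Polynomial.map_prod, cycProd]

lemma cycJacAt_inl_inl_one (i : Fin (m + 3)) :
    cycJacAt m p (.inl i) (.inl 1) =
      (cycProd m p - Polynomial.C (∏ k, p (.inr k))).coeff i := by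
  simp [cycJacAt_inl, Derivation.leibniz_prod, Polynomial.map_prod, cycProd]

lemma cycJacAt_inl_inr (i : Fin (m + 3)) (k : Fin (m + 2)) :
    cycJacAt m p (.inl i) (.inr k) =
      ((Polynomial.X + Polynomial.C (p (.inl 0) + p (.inl 1))) * cycProdErase m p k -
        Polynomial.C (p (.inl 1) * ∏ j ∈ Finset.univ.erase k, p (.inr j))).coeff i := by
  simp [cycJacAt_inl, Pi.single_apply, Polynomial.map_prod, cycProdErase,
    Derivation.leibniz_prod]

lemma cycProd_coeff_zero : (cycProd m p).coeff 0 = ∏ k, p (.inr k) := by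
  simp [cycProd, Polynomial.coeff_zero_eq_eval_zero, Polynomial.eval_prod]

lemma cycProd_coeff_top : (cycProd m p).coeff (m + 2) = 1 := by
  have hmonic : (cycProd m p).Monic :=
    Polynomial.monic_prod_of_monic _ _ fun k _ => Polynomial.monic_X_add_C _
  have hdeg : (cycProd m p).natDegree = m + 2 := by
    simp [cycProd, Polynomial.natDegree_prod_of_monic, Polynomial.monic_X_add_C]
  rw [← hdeg, hmonic.coeff_natDegree]

lemma cycProdErase_natDegree_le (k : Fin (m + 2)) : (cycProdErase m p k).natDegree ≤ m + 1 := by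
  refine (Polynomial.natDegree_prod_le _ _).trans ?_
  simp

theorem cycJacAt_linearIndependent_col (hb : ∏ k, p (.inr k) ≠ 0)
    (hinj : Function.Injective fun k => p (.inr k)) :
    LinearIndependent ℝ (cycJacAt m p).col := by
  rw [Fintype.linearIndependent_iff]
  intro v hv
  have hrow (s) : ∑ t, v t * cycJacAt m p s t = 0 := by
    simpa [Matrix.col] using congrFun hv s
  have hvb : ∀ k, v (.inr k) = 0 := by
    refine Fintype.linearIndependent_iff.mp (linearIndependent_prod_erase_X_add_C hinj) _ ?_
    change ∑ k, v (.inr k) • cycProdErase m p k = 0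
    rw [Polynomial.ext_iff_natDegree_le (n := m + 1)
      (Polynomial.natDegree_sum_le_of_forall_le _ _ fun k _ =>
        (Polynomial.natDegree_smul_le _ _).trans (cycProdErase_natDegree_le m p k)) (by simp)]
    intro i hi
    simpa [Polynomial.finsetSum_coeff, Fintype.sum_sum_type, cycJacAt_inr_inl,
      cycJacAt_inr_inr] using hrow (.inr ⟨i, by omega⟩)
  have hv0 : v (.inl 0) = 0 := by
    have := hrow (.inl 0)
    simp [Fintype.sum_sum_type, hvb, cycJacAt_inl_inl_zero, cycJacAt_inl_inl_one,
      cycProd_coeff_zero, -map_prod] at this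
    exact this.resolve_right hb
  have hv1 : v (.inl 1) = 0 := by
    simpa [Fintype.sum_sum_type, hvb, cycJacAt_inl_inl_zero, cycJacAt_inl_inl_one,
      cycProd_coeff_top, hv0, -map_prod] using hrow (.inl (Fin.last _))
  rintro ((s : Fin 2) | k)
  · fin_cases s
    exacts [hv0, hv1]
  · exact hvb k

lemma cycJacAt_col_inl_zero_eq_col_inl_one (h : ∏ k, p (.inr k) = 0) :
    (cycJacAt m p).col (.inl 0) = (cycJacAt m p).col (.inl 1) := by
  ext (i | i) <;>
    simp [cycJacAt_inl_inl_zero, cycJacAt_inl_inl_one, cycJacAt_inr_inl, h, -map_prod]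

lemma cycProdErase_eq_of_apply_eq {k l : Fin (m + 2)} (h : p (.inr k) = p (.inr l)) :
    cycProdErase m p k = cycProdErase m p l :=
  Finset.prod_erase_eq_of_apply_eq (Finset.mem_univ k) (Finset.mem_univ l) (by rw [h])

lemma cycJacAt_col_inr_eq_of_apply_eq {k l : Fin (m + 2)} (h : p (.inr k) = p (.inr l)) :
    (cycJacAt m p).col (.inr k) = (cycJacAt m p).col (.inr l) := by
  ext (i | i)
  · simp only [Matrix.col_apply, cycJacAt_inl_inr, cycProdErase_eq_of_apply_eq m p h,
      Finset.prod_erase_eq_of_apply_eq (f := fun j => p (.inr j)) (Finset.mem_univ k)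
        (Finset.mem_univ l) h]
  · simp only [Matrix.col_apply, cycJacAt_inr_inr, cycProdErase_eq_of_apply_eq m p h]

end Jacobian

/-- For the `n`-compartment cycle model (`n = m + 3 ≥ 3`) and every
point `p ∈ ℝ^{n+1}`, the Jacobian of the coefficient map `φ` at `p` has rank `n + 1` iff
`a₃₂a₄₃⋯a_{n,n-1}a_{1n} · ∏_{2 ≤ i < j ≤ n} (a_{i+1,i} - a_{j+1,j})` is nonzero at `p`.
In particular the cycle model is generically locally identifiable with singular locus the
vanishing set of this polynomial. -/
theorem cycJacAt_rank_iff (m : ℕ) (p : CycIx m → ℝ) :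
    (cycJacAt m p).rank = m + 4 ↔
      ((∏ k : Fin (m + 2), p (Sum.inr k)) *
          ∏ q ∈ Finset.univ.filter (fun q : Fin (m + 2) × Fin (m + 2) => q.1 < q.2),
            (p (Sum.inr q.1) - p (Sum.inr q.2))) ≠ 0 := by
  have hcard : Fintype.card (CycIx m) = m + 4 := by simp; omega
  rw [← hcard, Matrix.rank_eq_card_iff_linearIndependent_col, mul_ne_zero_iff,
    prod_sub_ne_zero_iff_injective fun k => p (.inr k)]
  refine ⟨fun hli => ⟨fun hb => ?_, fun k l hkl => ?_⟩,
    fun ⟨hb, hinj⟩ => cycJacAt_linearIndependent_col m p hb hinj⟩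
  · exact absurd (hli.injective (cycJacAt_col_inl_zero_eq_col_inl_one m p hb)) (by simp)
  · exact Sum.inr_injective (hli.injective (cycJacAt_col_inr_eq_of_apply_eq m p hkl))
end

section
/- Fix n ≥ 3 and let φ : ℝ^{n+1} → ℝ^{2n−1} be the coefficient map of the n-compartment cycle model. Let p = (a_{01}, a_{21}, a_{32}, …, a_{n,n−1}, a_{1n}) ∈ ℝ^{n+1} be a point whose coordinates a_{32}, a_{43}, …, a_{n,n−1}, a_{1n} are pairwise distinct and all nonzero. Then the fiber φ^{−1}(φ(p)) has exactly (n−1)! elements. That is, the identifiability degree of the cycle model is (n−1)!. -/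
open MvPolynomial

namespace CycAux
open Polynomial Matrix Finset

variable {R : Type*} [CommRing R] {m : ℕ} (a01 a21 : R) (b : Fin (m + 2) → R)

lemma cycSub_apply (i j : Fin (m + 2)) :
    (cycMatrix m a01 a21 b).submatrix Fin.succ Fin.succ i j =
      if i.val = j.val + 1 then b j else if i = j then -(b i) else 0 := by
  simp only [Matrix.submatrix_apply, cycMatrix, Matrix.of_apply]
  have h5 : subOne' (j.succ) = j := by simp [subOne', Fin.ext_iff]
  have h6 : subOne' (i.succ) = i := by simp [subOne', Fin.ext_iff]
  rw [h5, h6]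
  simp only [Fin.ext_iff, Fin.val_succ, Fin.val_zero]
  split_ifs <;> first | rfl | omega | (exfalso; omega) | tauto

lemma charpoly_sub :
    ((cycMatrix m a01 a21 b).submatrix Fin.succ Fin.succ).charpoly
      = ∏ k, (Polynomial.X + Polynomial.C (b k)) := by
  rw [Matrix.charpoly, Matrix.det_of_lowerTriangular]
  · apply Finset.prod_congr rfl
    intro k _
    rw [charmatrix_apply_eq, cycSub_apply]
    simp [sub_neg_eq_add]
  · intro i j hij
    have hij' : (i : ℕ) < (j : ℕ) := hij
    rw [charmatrix_apply_ne _ _ _ (fun h => by simp [h] at hij'), cycSub_apply]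
    rw [if_neg (by omega), if_neg (fun h => by simp [h] at hij')]
    simp

end CycAux

namespace CycAux
open Polynomial Matrix Finset

variable {R : Type*} [CommRing R] {m : ℕ} (a01 a21 : R) (b : Fin (m + 2) → R)

lemma charmatrix_submatrix_succ (N : Matrix (Fin (m+3)) (Fin (m+3)) R) :
    (charmatrix N).submatrix Fin.succ Fin.succ = charmatrix (N.submatrix Fin.succ Fin.succ) := by
  ext i j
  by_cases h : i = j
  · subst h; simp
  · rw [Matrix.submatrix_apply,
      charmatrix_apply_ne _ _ _ (fun hh => h (Fin.succ_inj.mp hh)),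
      charmatrix_apply_ne _ _ _ h, Matrix.submatrix_apply]


lemma det_corner_minor :
    ((charmatrix (cycMatrix m a01 a21 b)).submatrix Fin.succ Fin.castSucc).det
      = (-1)^(m+2) * Polynomial.C (a21 * ∏ i : Fin (m+1), b i.castSucc) := by
  set g : Fin (m+2) → R := fun i => if i = 0 then a21 else b ⟨i.val - 1, by omega⟩ with hg
  have htri : ((charmatrix (cycMatrix m a01 a21 b)).submatrix Fin.succ Fin.castSucc).BlockTriangular id := by
    intro i j hij
    have hj : (j:ℕ) < i := hij
    rw [Matrix.submatrix_apply, charmatrix_apply_ne _ _ _ (by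
      intro h; have := congrArg Fin.val h; simp [Fin.val_succ, Fin.coe_castSucc] at this; omega)]
    have h0 : cycMatrix m a01 a21 b i.succ j.castSucc = 0 := by
      simp only [cycMatrix, Matrix.of_apply, Fin.ext_iff, Fin.val_succ, Fin.coe_castSucc,
        Fin.val_zero]
      split_ifs <;> first | rfl | omega | (exfalso; omega) | tauto
    rw [h0, map_zero, neg_zero]
  rw [Matrix.det_of_upperTriangular htri]
  have hdiag : ∀ i : Fin (m+2),
      ((charmatrix (cycMatrix m a01 a21 b)).submatrix Fin.succ Fin.castSucc) i i
        = -Polynomial.C (g i) := by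
    intro i
    rw [Matrix.submatrix_apply, charmatrix_apply_ne _ _ _ (by
      intro h; have := congrArg Fin.val h; simp [Fin.val_succ, Fin.coe_castSucc] at this)]
    congr 1
    simp only [cycMatrix, Matrix.of_apply, hg, subOne', Fin.ext_iff, Fin.val_succ,
      Fin.coe_castSucc, Fin.val_zero]
    split_ifs <;> first | rfl | omega | (exfalso; omega) | tauto
  calc ∏ i : Fin (m+2), ((charmatrix (cycMatrix m a01 a21 b)).submatrix Fin.succ Fin.castSucc) i i
      = ∏ i : Fin (m+2), -Polynomial.C (g i) := Finset.prod_congr rfl fun i _ => hdiag i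
    _ = (-1)^(m+2) * Polynomial.C (∏ i : Fin (m+2), g i) := by
        rw [show (fun i : Fin (m+2) => -Polynomial.C (g i))
            = fun i => (-1 : R[X]) * Polynomial.C (g i) from funext fun i => by ring]
        rw [Finset.prod_mul_distrib, Finset.prod_const, map_prod]
        simp [Finset.card_univ]
    _ = (-1)^(m+2) * Polynomial.C (a21 * ∏ i : Fin (m+1), b i.castSucc) := by
        congr 1
        rw [Fin.prod_univ_succ]
        have h0 : g 0 = a21 := by simp [hg]
        have hs : ∀ i : Fin (m+1), g i.succ = b i.castSucc := by
          intro i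
          have h1 : (i.succ : Fin (m+2)) ≠ 0 := Fin.succ_ne_zero i
          rw [hg]
          simp only [h1, if_false]
          exact congrArg b (Fin.ext (by simp))
        rw [h0, Finset.prod_congr rfl (fun i _ => hs i)]

lemma charpoly_cyc :
    (cycMatrix m a01 a21 b).charpoly
      = (Polynomial.X + Polynomial.C (a01 + a21)) * (∏ k, (Polynomial.X + Polynomial.C (b k)))
        - Polynomial.C (a21 * ∏ k, b k) := by
  set N := cycMatrix m a01 a21 b with hN
  rw [Matrix.charpoly, Matrix.det_succ_row_zero]
  rw [← Finset.sum_subset (Finset.subset_univ ({0, Fin.last (m+2)} : Finset (Fin (m+3))))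
    (by
      intro j _ hj
      simp only [Finset.mem_insert, Finset.mem_singleton, not_or] at hj
      obtain ⟨hj0, hjl⟩ := hj
      have hj0' : ¬((0:Fin (m+3)) = j) := fun h => hj0 h.symm
      have hjl' : (j : ℕ) ≠ m + 2 := by
        intro h; exact hjl (by apply Fin.ext; simpa using h)
      have h1 : charmatrix N 0 j = 0 := by
        rw [charmatrix_apply_ne _ _ _ hj0']
        have h2 : N 0 j = 0 := by
          simp only [hN, cycMatrix, Matrix.of_apply]
          split_ifs <;> first | rfl | omega | tauto
        rw [h2, map_zero, neg_zero]
      rw [h1]; ring)]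
  rw [Finset.sum_pair (by
    intro h
    have := congrArg Fin.val h
    simp [Fin.val_last] at this)]
  -- first term
  have hd : charmatrix N 0 0 = Polynomial.X + Polynomial.C (a01 + a21) := by
    rw [charmatrix_apply_eq]
    have : N 0 0 = -a01 - a21 := by simp [hN, cycMatrix]
    rw [this, map_sub, map_neg, map_add]; ring
  have hcorner : charmatrix N 0 (Fin.last (m+2)) = -Polynomial.C (b (Fin.last (m+1))) := by
    have hne : (0 : Fin (m+3)) ≠ Fin.last (m+2) := by
      intro h; have := congrArg Fin.val h; simp [Fin.val_last] at this
    rw [charmatrix_apply_ne _ _ _ hne]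
    have : N 0 (Fin.last (m+2)) = b (Fin.last (m+1)) := by
      simp [hN, cycMatrix, Fin.val_last]
    rw [this]
  rw [hd, hcorner, Fin.succAbove_zero, Fin.succAbove_last,
    charmatrix_submatrix_succ, ← Matrix.charpoly, charpoly_sub a01 a21 b,
    det_corner_minor a01 a21 b]
  have hsgn : ((-1 : R[X])^((Fin.last (m+2) : Fin (m+3)) : ℕ)) = (-1)^(m+2) := by
    simp [Fin.val_last]
  rw [hsgn]
  have hb : b (Fin.last (m+1)) * (a21 * ∏ i : Fin (m+1), b i.castSucc)
      = a21 * ∏ k : Fin (m+2), b k := by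
    conv_rhs => rw [Fin.prod_univ_castSucc]
    ring
  have hsq : ((-1 : R[X])^(m+2)) * ((-1 : R[X])^(m+2)) = 1 := by
    rw [← pow_add, ← two_mul, pow_mul]; simp
  calc (-1)^(0:ℕ) * (Polynomial.X + Polynomial.C (a01 + a21)) * (∏ k, (Polynomial.X + Polynomial.C (b k)))
        + (-1)^(m+2) * (-Polynomial.C (b (Fin.last (m+1)))) * ((-1)^(m+2) * Polynomial.C (a21 * ∏ i : Fin (m+1), b i.castSucc))
      = (Polynomial.X + Polynomial.C (a01 + a21)) * (∏ k, (Polynomial.X + Polynomial.C (b k)))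
        - ((-1)^(m+2) * (-1)^(m+2)) * (Polynomial.C (b (Fin.last (m+1))) * Polynomial.C (a21 * ∏ i : Fin (m+1), b i.castSucc)) := by ring
    _ = (Polynomial.X + Polynomial.C (a01 + a21)) * (∏ k, (Polynomial.X + Polynomial.C (b k)))
        - Polynomial.C (a21 * ∏ k, b k) := by
        rw [hsq, one_mul, ← Polynomial.C_mul, hb]

end CycAux

namespace CycAux
open Polynomial Matrix Finset

lemma cycMatrix_map {R S : Type*} [CommRing R] [CommRing S] (m : ℕ) (f : R →+* S)
    (a01 a21 : R) (b : Fin (m + 2) → R) :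
    (cycMatrix m a01 a21 b).map f = cycMatrix m (f a01) (f a21) (fun k => f (b k)) := by
  ext i j
  simp only [Matrix.map_apply, cycMatrix, Matrix.of_apply]
  split_ifs <;> simp

variable {m : ℕ}

/-- The `d`-polynomial of a parameter point. -/
noncomputable def dpoly (q : CycIx m → ℝ) : Polynomial ℝ :=
  ∏ k : Fin (m+2), (Polynomial.X + Polynomial.C (q (Sum.inr k)))

/-- The `c`-polynomial of a parameter point. -/
noncomputable def cpoly (q : CycIx m → ℝ) : Polynomial ℝ :=
  (Polynomial.X + Polynomial.C (q (Sum.inl 0) + q (Sum.inl 1))) * dpoly q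
    - Polynomial.C (q (Sum.inl 1) * ∏ k : Fin (m+2), q (Sum.inr k))

lemma cycA_map (q : CycIx m → ℝ) :
    (cycA m).map (MvPolynomial.eval q) =
      cycMatrix m (q (Sum.inl 0)) (q (Sum.inl 1)) (fun k => q (Sum.inr k)) := by
  rw [show (cycA m) = cycMatrix m (X (Sum.inl 0)) (X (Sum.inl 1)) (fun k => X (Sum.inr k)) from rfl,
    cycMatrix_map]
  simp [MvPolynomial.eval_X]

lemma cycPhi_inl (q : CycIx m → ℝ) (i : Fin (m+3)) :
    cycPhi m q (Sum.inl i) = (cpoly q).coeff i.val := by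
  have h1 : cycPhi m q (Sum.inl i) = MvPolynomial.eval q ((cycA m).charpoly.coeff i.val) := rfl
  rw [h1, ← Polynomial.coeff_map, ← Matrix.charpoly_map, cycA_map, charpoly_cyc]
  rfl

lemma cycPhi_inr (q : CycIx m → ℝ) (i : Fin (m+2)) :
    cycPhi m q (Sum.inr i) = (dpoly q).coeff i.val := by
  have h1 : cycPhi m q (Sum.inr i)
      = MvPolynomial.eval q (((cycA m).submatrix Fin.succ Fin.succ).charpoly.coeff i.val) := rfl
  have h2 : ((cycA m).submatrix Fin.succ Fin.succ).map (MvPolynomial.eval q)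
      = ((cycA m).map (MvPolynomial.eval q)).submatrix Fin.succ Fin.succ := rfl
  rw [h1, ← Polynomial.coeff_map, ← Matrix.charpoly_map, h2, cycA_map, charpoly_sub]
  rfl

lemma dpoly_monic (q : CycIx m → ℝ) : (dpoly q).Monic :=
  Polynomial.monic_prod_of_monic _ _ fun k _ => Polynomial.monic_X_add_C _

lemma dpoly_natDegree (q : CycIx m → ℝ) : (dpoly q).natDegree = m + 2 := by
  rw [dpoly, Polynomial.natDegree_prod_of_monic _ _ fun k _ => Polynomial.monic_X_add_C _]
  simp

lemma dpoly_eq_of_phi_eq {q p : CycIx m → ℝ} (h : cycPhi m q = cycPhi m p) :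
    dpoly q = dpoly p := by
  ext i
  rcases lt_trichotomy i (m + 2) with h1 | rfl | h1
  · have := congrFun h (Sum.inr ⟨i, h1⟩)
    rwa [cycPhi_inr, cycPhi_inr] at this
  · rw [← dpoly_natDegree q, (dpoly_monic q).coeff_natDegree, dpoly_natDegree q,
      ← dpoly_natDegree p, (dpoly_monic p).coeff_natDegree]
  · rw [Polynomial.coeff_eq_zero_of_natDegree_lt (by rw [dpoly_natDegree]; exact h1),
      Polynomial.coeff_eq_zero_of_natDegree_lt (by rw [dpoly_natDegree]; exact h1)]

end CycAux



namespace CycAux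
open Polynomial Finset

variable {m : ℕ}

lemma dpoly_roots (q : CycIx m → ℝ) :
    (dpoly q).roots = Finset.univ.val.map (fun k : Fin (m+2) => -(q (Sum.inr k))) := by
  have h : dpoly q = ((Finset.univ.val.map (fun k : Fin (m+2) => -(q (Sum.inr k)))).map
      (fun a => Polynomial.X - Polynomial.C a)).prod := by
    rw [dpoly, Finset.prod_eq_multiset_prod, Multiset.map_map]
    apply congrArg
    apply Multiset.map_congr rfl
    intro k _
    simp [sub_neg_eq_add]
  rw [h, Polynomial.roots_multiset_prod_X_sub_C]

end CycAux

/-- For the `n`-compartment cycle model (`n = m + 3 ≥ 3`) and any point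
`p ∈ ℝ^{n+1}` whose coordinates `a₃₂, a₄₃, …, a_{n,n-1}, a_{1n}` are pairwise distinct and
all nonzero, the fiber `φ⁻¹(φ(p))` of the coefficient map has exactly `(n-1)!` elements:
the identifiability degree of the cycle model is `(n-1)!`. -/
theorem cycPhi_fiber_card (m : ℕ) (p : CycIx m → ℝ)
    (hzero : ∀ k : Fin (m + 2), p (Sum.inr k) ≠ 0)
    (hinj : Function.Injective fun k : Fin (m + 2) => p (Sum.inr k)) :
    Set.ncard {q : CycIx m → ℝ | cycPhi m q = cycPhi m p} = Nat.factorial (m + 2) := by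
  classical
  set f : Equiv.Perm (Fin (m+2)) → (CycIx m → ℝ) := fun σ => p ∘ Sum.map id σ with hf
  have hset : {q : CycIx m → ℝ | cycPhi m q = cycPhi m p} = Set.range f := by
    ext q
    simp only [Set.mem_setOf_eq, Set.mem_range]
    constructor
    · intro h
      have hD := CycAux.dpoly_eq_of_phi_eq h
      have hroots : (Finset.univ.val.map (fun k : Fin (m+2) => q (Sum.inr k)))
          = (Finset.univ.val.map (fun k : Fin (m+2) => p (Sum.inr k))) := by
        have h1 := congrArg Polynomial.roots hD
        rw [CycAux.dpoly_roots, CycAux.dpoly_roots] at h1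
        have h2 := congrArg (Multiset.map (fun x : ℝ => -x)) h1
        simpa only [Multiset.map_map, Function.comp, neg_neg] using h2
      have hP : (∏ k : Fin (m+2), q (Sum.inr k)) = ∏ k : Fin (m+2), p (Sum.inr k) := by
        rw [Finset.prod_eq_multiset_prod, Finset.prod_eq_multiset_prod, hroots]
      have hPne : (∏ k : Fin (m+2), p (Sum.inr k)) ≠ 0 :=
        Finset.prod_ne_zero_iff.mpr (fun k _ => hzero k)
      have hD1 : (CycAux.dpoly p).coeff (m+2) = 1 := by
        have h3 := (CycAux.dpoly_monic p).coeff_natDegree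
        rwa [CycAux.dpoly_natDegree] at h3
      have e2 : ∀ s A : ℝ,
          ((Polynomial.X + Polynomial.C s) * CycAux.dpoly p - Polynomial.C A).coeff (m+2)
            = (CycAux.dpoly p).coeff (m+1) + s := by
        intro s A
        rw [Polynomial.coeff_sub, add_mul, Polynomial.coeff_add,
          show m+2 = (m+1)+1 from rfl, Polynomial.coeff_X_mul, Polynomial.coeff_C_mul, hD1,
          Polynomial.coeff_C]
        simp
      have e0 : ∀ s A : ℝ,
          ((Polynomial.X + Polynomial.C s) * CycAux.dpoly p - Polynomial.C A).coeff 0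
            = s * (CycAux.dpoly p).coeff 0 - A := by
        intro s A
        rw [Polynomial.coeff_sub, Polynomial.mul_coeff_zero, Polynomial.coeff_add,
          Polynomial.coeff_X_zero, Polynomial.coeff_C_zero, Polynomial.coeff_C]
        simp
      have hs : q (Sum.inl 0) + q (Sum.inl 1) = p (Sum.inl 0) + p (Sum.inl 1) := by
        have hcm2 := congrFun h (Sum.inl ⟨m+2, by omega⟩)
        rw [CycAux.cycPhi_inl, CycAux.cycPhi_inl] at hcm2
        simp only [CycAux.cpoly] at hcm2
        rw [hD] at hcm2
        rw [e2, e2] at hcm2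
        linarith
      have hA : q (Sum.inl 1) = p (Sum.inl 1) := by
        have hc0 := congrFun h (Sum.inl ⟨0, by omega⟩)
        rw [CycAux.cycPhi_inl, CycAux.cycPhi_inl] at hc0
        simp only [CycAux.cpoly] at hc0
        rw [hD, hP] at hc0
        rw [e0, e0] at hc0
        have h4 : q (Sum.inl 1) * (∏ k : Fin (m+2), p (Sum.inr k))
            = p (Sum.inl 1) * (∏ k : Fin (m+2), p (Sum.inr k)) := by
          rw [hs] at hc0; linarith
        exact mul_right_cancel₀ hPne h4
      have h0 : q (Sum.inl 0) = p (Sum.inl 0) := by linarith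
      have hqinj : ∀ a b : Fin (m+2), q (Sum.inr a) = q (Sum.inr b) → a = b := by
        have hnd : (Finset.univ.val.map (fun k : Fin (m+2) => q (Sum.inr k))).Nodup := by
          rw [hroots]
          exact Multiset.Nodup.map hinj Finset.univ.nodup
        intro a b hab
        exact (Multiset.nodup_map_iff_inj_on Finset.univ.nodup).mp hnd a
          (Finset.mem_univ a) b (Finset.mem_univ b) hab
      have hmem : ∀ k : Fin (m+2), ∃ j, p (Sum.inr j) = q (Sum.inr k) := by
        intro k
        have hk : q (Sum.inr k)
            ∈ Finset.univ.val.map (fun k : Fin (m+2) => q (Sum.inr k)) :=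
          Multiset.mem_map.mpr ⟨k, Finset.mem_univ k, rfl⟩
        rw [hroots] at hk
        obtain ⟨j, _, hj⟩ := Multiset.mem_map.mp hk
        exact ⟨j, hj⟩
      choose τ hτ using hmem
      have hτinj : Function.Injective τ := by
        intro a b hab
        apply hqinj
        rw [← hτ a, ← hτ b, hab]
      obtain ⟨hτi, hτs⟩ := Finite.injective_iff_bijective.mp hτinj
      refine ⟨Equiv.ofBijective τ ⟨hτi, hτs⟩, ?_⟩
      funext s
      cases s with
      | inl i =>
        show p (Sum.inl i) = q (Sum.inl i)
        fin_cases i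
        · exact h0.symm
        · exact hA.symm
      | inr k =>
        show p (Sum.inr (τ k)) = q (Sum.inr k)
        exact hτ k
    · rintro ⟨σ, rfl⟩
      have hD : CycAux.dpoly (f σ) = CycAux.dpoly p := by
        rw [CycAux.dpoly, CycAux.dpoly]
        exact Equiv.prod_comp σ
          (fun k => Polynomial.X + Polynomial.C (p (Sum.inr k)))
      have hP : (∏ k : Fin (m+2), f σ (Sum.inr k)) = ∏ k : Fin (m+2), p (Sum.inr k) :=
        Equiv.prod_comp σ (fun k => p (Sum.inr k))
      have hc : CycAux.cpoly (f σ) = CycAux.cpoly p := by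
        rw [CycAux.cpoly, CycAux.cpoly, hD]
        show _ - Polynomial.C (f σ (Sum.inl 1) * _) = _
        rw [hP]
        rfl
      funext s
      cases s with
      | inl i => rw [CycAux.cycPhi_inl, CycAux.cycPhi_inl, hc]
      | inr k => rw [CycAux.cycPhi_inr, CycAux.cycPhi_inr, hD]
  have hfinj : Function.Injective f := by
    intro σ σ' hσ
    apply Equiv.ext
    intro k
    exact hinj (congrFun hσ (Sum.inr k))
  rw [hset, ← Set.image_univ, Set.ncard_image_of_injective _ hfinj, Set.ncard_univ,
    Nat.card_eq_fintype_card, Fintype.card_perm, Fintype.card_fin]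
end

section
/- Fix n ≥ 3 and let A be the cycle compartmental matrix in the parameters a_{01}, a_{21}, a_{32}, …, a_{n,n−1}, a_{1n}. Write E_j for the j-th elementary symmetric polynomial in a_{32}, a_{43}, …, a_{n,n−1}, a_{1n}. Then the coefficients c_i of λ^i in det(λI − A) satisfy c_0 = a_{01}E_{n−1} and c_i = (a_{01} + a_{21})E_{n−i−1} + E_{n−i} for 1 ≤ i ≤ n−1, and the coefficients d_i of λ^i in det(λI − A_{11}) satisfy d_i = E_{n−i−1} for 0 ≤ i ≤ n−2. -/
open Polynomial Matrix Finset

section Aux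

variable {R : Type*} [CommRing R] (m : ℕ) (a01 a21 : R) (b : Fin (m + 2) → R)

/-- Master entry lemma with all conditions phrased over `ℕ`. -/
lemma cyc_apply (i j : Fin (m + 3)) :
    cycMatrix m a01 a21 b i j =
      if (i : ℕ) = 0 ∧ (j : ℕ) = 0 then -a01 - a21
      else if (i : ℕ) = 0 ∧ (j : ℕ) = m + 2 then b (Fin.last (m + 1))
      else if (i : ℕ) = (j : ℕ) + 1 then
        (if (j : ℕ) = 0 then a21 else b ⟨(j : ℕ) - 1, by have := j.isLt; omega⟩)
      else if (i : ℕ) = (j : ℕ) then -(b ⟨(i : ℕ) - 1, by have := i.isLt; omega⟩)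
      else 0 := by
  simp only [cycMatrix, Matrix.of_apply, subOne', Fin.ext_iff, Fin.val_zero]

lemma cyc_succ_succ_diag (i : Fin (m + 2)) :
    cycMatrix m a01 a21 b i.succ i.succ = -(b i) := by
  rw [cyc_apply, if_neg (by simp [Fin.val_succ]), if_neg (by simp [Fin.val_succ]),
    if_neg (by omega), if_pos rfl]
  congr 1

lemma cyc_succ_succ_ne (i j : Fin (m + 2)) (h : ¬ ((i : ℕ) = (j : ℕ) + 1)) (h' : i ≠ j) :
    cycMatrix m a01 a21 b i.succ j.succ = 0 := by
  rw [cyc_apply, if_neg (by simp [Fin.val_succ]), if_neg (by simp [Fin.val_succ]),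
    if_neg (by simp only [Fin.val_succ]; omega),
    if_neg (by simp only [Fin.val_succ]; exact fun hh => h' (Fin.ext (by omega)))]

/-- The charpoly of the submatrix `A₁₁`. -/
lemma cyc_sub_charpoly :
    ((cycMatrix m a01 a21 b).submatrix Fin.succ Fin.succ).charpoly
      = ∏ k : Fin (m + 2), (X + C (b k)) := by
  unfold Matrix.charpoly
  rw [Matrix.det_of_lowerTriangular]
  · refine Finset.prod_congr rfl fun i _ => ?_
    rw [Matrix.charmatrix_apply_eq, Matrix.submatrix_apply, cyc_succ_succ_diag]
    simp
  · intro i j hij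
    have hlt : i < j := hij
    have hv := (Fin.lt_iff_val_lt_val).mp hlt
    have hne : i ≠ j := ne_of_lt hlt
    rw [Matrix.charmatrix_apply_ne _ _ _ hne, Matrix.submatrix_apply,
      cyc_succ_succ_ne m a01 a21 b i j (by omega) hne]
    simp

/-- The characteristic polynomial of the cycle matrix. -/
lemma cyc_charpoly :
    (cycMatrix m a01 a21 b).charpoly
      = (X + C (a01 + a21)) * (∏ k : Fin (m + 2), (X + C (b k)))
        - C (a21 * ∏ k : Fin (m + 2), b k) := by
  set A := cycMatrix m a01 a21 b with hA
  set M := charmatrix A with hM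
  have hdet : A.charpoly = M.det := rfl
  rw [hdet, Matrix.det_succ_row_zero]
  rw [Fin.sum_univ_succ]
  have hzero : ∀ j : Fin (m + 2), j ≠ Fin.last (m + 1) → M 0 j.succ = 0 := by
    intro j hj
    have hne : (0 : Fin (m + 3)) ≠ j.succ := (Fin.succ_ne_zero j).symm
    rw [hM, Matrix.charmatrix_apply_ne _ _ _ hne]
    have hjv : (j : ℕ) < m + 1 := by
      rcases lt_or_eq_of_le (Nat.lt_succ_iff.mp j.isLt) with h | h
      · exact h
      · exact absurd (Fin.ext h) hj
    have : A 0 j.succ = 0 := by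
      rw [hA, cyc_apply]
      rw [if_neg (by simp [Fin.val_succ]), if_neg (by simp [Fin.val_succ]; omega),
        if_neg (by simp [Fin.val_succ]), if_neg (by simp [Fin.val_succ])]
    rw [this]; simp
  rw [Finset.sum_eq_single_of_mem (Fin.last (m + 1)) (Finset.mem_univ _)
    (fun j _ hj => by rw [hzero j hj]; ring)]
  have h00 : M 0 0 = X + C (a01 + a21) := by
    rw [hM, Matrix.charmatrix_apply_eq]
    have : A 0 0 = -a01 - a21 := by
      rw [hA, cyc_apply, if_pos ⟨rfl, rfl⟩]
    rw [this]
    simp only [map_sub, map_neg, map_add]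
    ring
  have h0l : M 0 (Fin.last (m + 1)).succ = -C (b (Fin.last (m + 1))) := by
    have hne : (0 : Fin (m + 3)) ≠ (Fin.last (m + 1)).succ :=
      (Fin.succ_ne_zero _).symm
    rw [hM, Matrix.charmatrix_apply_ne _ _ _ hne]
    have : A 0 (Fin.last (m + 1)).succ = b (Fin.last (m + 1)) := by
      rw [hA, cyc_apply, if_neg (by simp [Fin.val_succ, Fin.val_last]),
        if_pos ⟨rfl, by simp [Fin.val_succ, Fin.val_last]⟩]
    rw [this]
  -- minor at column 0
  have hminor0 : (M.submatrix Fin.succ (Fin.succAbove 0)).det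
      = ∏ k : Fin (m + 2), (X + C (b k)) := by
    rw [Fin.succAbove_zero]
    have heq : M.submatrix Fin.succ Fin.succ = charmatrix (A.submatrix Fin.succ Fin.succ) := by
      ext i j
      by_cases hij : i = j
      · subst hij
        rw [Matrix.submatrix_apply, hM, Matrix.charmatrix_apply_eq,
          Matrix.charmatrix_apply_eq, Matrix.submatrix_apply]
      · rw [Matrix.submatrix_apply, hM,
          Matrix.charmatrix_apply_ne _ _ _ (fun h => hij (Fin.succ_injective _ h)),
          Matrix.charmatrix_apply_ne _ _ _ hij, Matrix.submatrix_apply]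
    rw [heq]
    exact cyc_sub_charpoly m a01 a21 b
  -- minor at column last
  have hminorl : (M.submatrix Fin.succ (Fin.succAbove (Fin.last (m + 1)).succ)).det
      = (-1) ^ (m + 2) * (C a21 * ∏ k : Fin (m + 1), C (b k.castSucc)) := by
    have hsl : (Fin.last (m + 1)).succ = Fin.last (m + 2) := rfl
    rw [hsl, Fin.succAbove_last]
    set N := M.submatrix Fin.succ Fin.castSucc with hN
    have hNd : ∀ i : Fin (m + 2),
        N i i = -(if (i : ℕ) = 0 then C a21
          else C (b ⟨(i : ℕ) - 1, by have := i.isLt; omega⟩)) := by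
      intro i
      have hne : i.succ ≠ i.castSucc := by
        intro h
        have := congrArg Fin.val h
        simp [Fin.val_succ, Fin.coe_castSucc] at this
      rw [hN, Matrix.submatrix_apply, hM, Matrix.charmatrix_apply_ne _ _ _ hne]
      have : A i.succ i.castSucc =
          (if (i : ℕ) = 0 then a21 else b ⟨(i : ℕ) - 1, by have := i.isLt; omega⟩) := by
        rw [hA, cyc_apply, if_neg (by simp [Fin.val_succ]),
          if_neg (by simp [Fin.val_succ]),
          if_pos (by simp [Fin.val_succ, Fin.coe_castSucc])]
        simp only [Fin.coe_castSucc]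
      rw [this]
      split <;> simp
    have hNtri : ∀ i j : Fin (m + 2), j < i → N i j = 0 := by
      intro i j hlt
      have hvlt := (Fin.lt_iff_val_lt_val).mp hlt
      have hne : i.succ ≠ j.castSucc := by
        intro h
        have := congrArg Fin.val h
        simp only [Fin.val_succ, Fin.coe_castSucc] at this
        omega
      rw [hN, Matrix.submatrix_apply, hM, Matrix.charmatrix_apply_ne _ _ _ hne]
      have : A i.succ j.castSucc = 0 := by
        rw [hA, cyc_apply, if_neg (by simp [Fin.val_succ]),
          if_neg (by simp [Fin.val_succ]),
          if_neg (by simp only [Fin.val_succ, Fin.coe_castSucc]; omega),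
          if_neg (by simp only [Fin.val_succ, Fin.coe_castSucc]; omega)]
      rw [this]; simp
    rw [Matrix.det_of_upperTriangular (fun i j h => hNtri i j h)]
    have hfac : ∀ i : Fin (m + 2), N i i =
        (-1) * (if (i : ℕ) = 0 then C a21
          else C (b ⟨(i : ℕ) - 1, by have := i.isLt; omega⟩)) := by
      intro i; rw [hNd i]; ring
    rw [Finset.prod_congr rfl (fun i _ => hfac i), Finset.prod_mul_distrib,
      Finset.prod_const,
      show ((Finset.univ : Finset (Fin (m + 2))).card) = m + 2 by simp]
    congr 1
    rw [Fin.prod_univ_succ]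
    have hfirst : (if ((0 : Fin (m + 2)) : ℕ) = 0 then C a21
        else C (b ⟨((0 : Fin (m + 2)) : ℕ) - 1, by omega⟩)) = C a21 := by simp
    rw [hfirst]
    congr 1
  -- assemble
  rw [h00, h0l, hminor0, hminorl]
  have hsign : ((-1 : R[X])) ^ (((Fin.last (m + 1)).succ : Fin (m + 3)) : ℕ)
      = (-1) ^ (m + 2) := by
    norm_num [Fin.val_succ, Fin.val_last]
  rw [hsign]
  have hprod : (C a21 * ∏ k : Fin (m + 1), C (b k.castSucc)) * C (b (Fin.last (m + 1)))
      = C (a21 * ∏ k : Fin (m + 2), b k) := by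
    simp only [Fin.prod_univ_castSucc (f := b), _root_.map_mul,
      map_prod (Polynomial.C : R →+* Polynomial R)]
    ring
  have hsq : ((-1 : R[X])) ^ (m + 2) * ((-1) ^ (m + 2)) = 1 := by
    rw [← pow_add]
    exact Even.neg_one_pow ⟨m + 2, by ring⟩
  calc (-1) ^ ((0 : Fin (m + 3)) : ℕ) * (X + C (a01 + a21)) * ∏ k : Fin (m + 2), (X + C (b k))
        + (-1) ^ (m + 2) * -C (b (Fin.last (m + 1)))
          * ((-1) ^ (m + 2) * (C a21 * ∏ k : Fin (m + 1), C (b k.castSucc)))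
      = (X + C (a01 + a21)) * (∏ k : Fin (m + 2), (X + C (b k)))
        - ((-1) ^ (m + 2) * ((-1) ^ (m + 2)))
          * ((C a21 * ∏ k : Fin (m + 1), C (b k.castSucc)) * C (b (Fin.last (m + 1)))) := by
        simp only [Fin.val_zero, pow_zero]
        ring
    _ = _ := by rw [hsq, hprod]; ring

end Aux

/-- For the `n`-compartment cycle model (`n = m + 3 ≥ 3`), writing
`E_j` for the `j`-th elementary symmetric polynomial in `a₃₂, a₄₃, …, a_{n,n-1}, a_{1n}`:
the coefficients `c_i` of `λ^i` in `det (λI - A)` satisfy `c₀ = a₀₁ E_{n-1}` and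
`c_i = (a₀₁ + a₂₁) E_{n-i-1} + E_{n-i}` for `1 ≤ i ≤ n - 1`, and the coefficients `d_i`
of `λ^i` in `det (λI - A₁₁)` satisfy `d_i = E_{n-i-1}` for `0 ≤ i ≤ n - 2`. -/
theorem cyc_coeffs {R : Type*} [CommRing R] (m : ℕ) (a01 a21 : R) (b : Fin (m + 2) → R) :
    ((cycMatrix m a01 a21 b).charpoly.coeff 0 = a01 * esymmOf Finset.univ b (m + 2)) ∧
      (∀ i : ℕ, 1 ≤ i → i ≤ m + 2 →
        (cycMatrix m a01 a21 b).charpoly.coeff i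
          = (a01 + a21) * esymmOf Finset.univ b (m + 2 - i)
            + esymmOf Finset.univ b (m + 3 - i)) ∧
      (∀ i : ℕ, i ≤ m + 1 →
        ((cycMatrix m a01 a21 b).submatrix Fin.succ Fin.succ).charpoly.coeff i
          = esymmOf Finset.univ b (m + 2 - i)) := by
  have hP : ∀ k : ℕ, k ≤ m + 2 →
      (∏ i : Fin (m + 2), (X + C (b i))).coeff k = esymmOf Finset.univ b (m + 2 - k) := by
    intro k hk
    rw [Finset.prod_X_add_C_coeff _ _ (by simpa using hk)]
    rw [esymmOf]
    congr 1
    simp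
  have hE : esymmOf (Finset.univ : Finset (Fin (m + 2))) b (m + 2)
      = ∏ k : Fin (m + 2), b k := by
    have h2 : Finset.powersetCard (m + 2) (Finset.univ : Finset (Fin (m + 2)))
        = {Finset.univ} := by
      have h3 := Finset.powersetCard_self (Finset.univ : Finset (Fin (m + 2)))
      rwa [Finset.card_univ, Fintype.card_fin] at h3
    rw [esymmOf, h2, Finset.sum_singleton]
  refine ⟨?_, ?_, ?_⟩
  · rw [cyc_charpoly, Polynomial.coeff_sub, Polynomial.mul_coeff_zero,
      Polynomial.coeff_C_zero]
    have h0 : (X + C (a01 + a21)).coeff 0 = a01 + a21 := by simp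
    rw [h0, hP 0 (by omega), Nat.sub_zero, hE]
    ring
  · intro i h1 h2
    obtain ⟨j, rfl⟩ : ∃ j, i = j + 1 := ⟨i - 1, by omega⟩
    rw [cyc_charpoly, Polynomial.coeff_sub, add_mul, Polynomial.coeff_add,
      Polynomial.coeff_X_mul, Polynomial.coeff_C_mul, Polynomial.coeff_C]
    rw [hP j (by omega), hP (j + 1) (by omega), if_neg (by omega),
      show m + 3 - (j + 1) = m + 2 - j from by omega]
    ring
  · intro i hi
    rw [cyc_sub_charpoly, hP i (by omega)]
end
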